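/- arXiv:2309.00532 — 3 statements merged into one kernel-verified Lean document; each statement's English description precedes it below -/
import Mathlib

section
/- (Soundness of ℓGL.) If there is an ∞-proof in ℓK4 of the sequent ∅ ⇒ x:A (i.e. ℓGL ⊢ x:A), then every relational model whose accessibility relation is transitive and terminating satisfies A at every world. Equivalently: given an ∞-proof of ∅ ⇒ x:A and a transitive relational model M with M,w ⊭ A for some world w, the accessibility relation of M admits an infinite path. -/
namespace IGL

/-- Modal formulas over propositional symbols indexed by naturals. -/
inductive Formula : Type
  | atom : ℕ → Formula
  | bot  : Formula
  | and  : Formula → Formula → Formula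
  | or   : Formula → Formula → Formula
  | imp  : Formula → Formula → Formula
  | box  : Formula → Formula
  | dia  : Formula → Formula

/-- ¬A abbreviates A → ⊥. -/
def Formula.neg (A : Formula) : Formula := Formula.imp A Formula.bot

/-- Löb's axiom □(□A→A)→□A. -/
def lobAx (A : Formula) : Formula :=
  Formula.imp (Formula.box (Formula.imp (Formula.box A) A)) (Formula.box A)

/-- Boolean evaluation of a formula, treating modal (sub)formulas and atoms as
propositional atoms; used to define substitution instances of classical
propositional tautologies. -/
def evalCPL (v : Formula → Bool) : Formula → Bool
  | Formula.atom n  => v (Formula.atom n)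
  | Formula.bot     => false
  | Formula.and A B => evalCPL v A && evalCPL v B
  | Formula.or  A B => evalCPL v A || evalCPL v B
  | Formula.imp A B => !evalCPL v A || evalCPL v B
  | Formula.box A   => v (Formula.box A)
  | Formula.dia A   => v (Formula.dia A)

/-- A (substitution instance of a) theorem of classical propositional logic. -/
def Taut (A : Formula) : Prop := ∀ v, evalCPL v A = true

/-- The modal logic K: classical propositional logic, axiom k, modus ponens, necessitation. -/
inductive KProof : Formula → Prop
  | taut {A : Formula} : Taut A → KProof A
  | axK (A B : Formula) :
      KProof (Formula.imp (Formula.box (Formula.imp A B))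
        (Formula.imp (Formula.box A) (Formula.box B)))
  | mp {A B : Formula} : KProof (Formula.imp A B) → KProof A → KProof B
  | nec {A : Formula} : KProof A → KProof (Formula.box A)

/-- The modal logic K4: K plus axiom 4. -/
inductive K4Proof : Formula → Prop
  | taut {A : Formula} : Taut A → K4Proof A
  | axK (A B : Formula) :
      K4Proof (Formula.imp (Formula.box (Formula.imp A B))
        (Formula.imp (Formula.box A) (Formula.box B)))
  | ax4 (A : Formula) :
      K4Proof (Formula.imp (Formula.box A) (Formula.box (Formula.box A)))
  | mp {A B : Formula} : K4Proof (Formula.imp A B) → K4Proof A → K4Proof B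
  | nec {A : Formula} : K4Proof A → K4Proof (Formula.box A)

/-- Gödel–Löb logic GL: K4 plus Löb's axiom. -/
inductive GLProof : Formula → Prop
  | taut {A : Formula} : Taut A → GLProof A
  | axK (A B : Formula) :
      GLProof (Formula.imp (Formula.box (Formula.imp A B))
        (Formula.imp (Formula.box A) (Formula.box B)))
  | ax4 (A : Formula) :
      GLProof (Formula.imp (Formula.box A) (Formula.box (Formula.box A)))
  | axLob (A : Formula) : GLProof (lobAx A)
  | mp {A B : Formula} : GLProof (Formula.imp A B) → GLProof A → GLProof B
  | nec {A : Formula} : GLProof A → GLProof (Formula.box A)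

/-- Classical relational (Kripke) satisfaction. -/
def sat {W : Type} (R : W → W → Prop) (V : W → ℕ → Prop) : W → Formula → Prop
  | w, Formula.atom n  => V w n
  | _, Formula.bot     => False
  | w, Formula.and A B => sat R V w A ∧ sat R V w B
  | w, Formula.or  A B => sat R V w A ∨ sat R V w B
  | w, Formula.imp A B => sat R V w A → sat R V w B
  | w, Formula.box A   => ∀ v, R w v → sat R V v A
  | w, Formula.dia A   => ∃ v, R w v ∧ sat R V v A

/-- A frame satisfies `A` if every model based on it satisfies `A` at every world. -/
def FrameSat (W : Type) (R : W → W → Prop) (A : Formula) : Prop :=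
  ∀ (V : W → ℕ → Prop) (w : W), sat R V w A

/-- A relation is terminating if it admits no infinite path. -/
def Terminating {α : Type} (r : α → α → Prop) : Prop :=
  ¬ ∃ f : ℕ → α, ∀ n, r (f n) (f (n + 1))

/-! ### Labelled sequents -/

/-- A labelled formula `x : A`. -/
abbrev LFormula := ℕ × Formula

/-- A labelled sequent `R, Γ ⇒ Δ`: a set of relational atoms and two
multisets of labelled formulas. -/
structure Sequent : Type where
  rel : Set (ℕ × ℕ)
  left : Multiset LFormula
  right : Multiset LFormula

/-- Variables occurring in a set of relational atoms. -/
def relVars (R : Set (ℕ × ℕ)) : Set ℕ := {z | ∃ w, (z, w) ∈ R ∨ (w, z) ∈ R}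

/-- Labels occurring in a multiset of labelled formulas. -/
def mLabels (Γ : Multiset LFormula) : Set ℕ := {z | ∃ A, (z, A) ∈ Γ}

/-- The variables/labels occurring in a sequent. -/
def Sequent.vars (S : Sequent) : Set ℕ := relVars S.rel ∪ mLabels S.left ∪ mLabels S.right

/-- `y` is a fresh label for the sequent `S`. -/
def Fresh (y : ℕ) (S : Sequent) : Prop := y ∉ S.vars

/-- A sequent has exactly one formula on the right-hand side. -/
def SingleRHS (S : Sequent) : Prop := Multiset.card S.right = 1

/-- Rule instances of the standard labelled calculi, presented as a relation
between a conclusion and its list of premisses.  The flag `tr` enables the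
transitivity rule (giving ℓK4 rather than ℓK), the flag `thn` enables the
relational thinning rule `th`, and the flag `ir` imposes the restriction that
the →-right and □-right rules have exactly one formula on the RHS (giving the
multi-succedent intuitionistic system mℓIK4). -/
inductive Rule (tr thn ir : Bool) : Sequent → List Sequent → Prop
  | id (R : Set (ℕ × ℕ)) (x p : ℕ) :
      Rule tr thn ir ⟨R, {(x, Formula.atom p)}, {(x, Formula.atom p)}⟩ []
  | cut (R : Set (ℕ × ℕ)) (Γ Γ' Δ Δ' : Multiset LFormula) (x : ℕ) (A : Formula) :
      Rule tr thn ir ⟨R, Γ + Γ', Δ + Δ'⟩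
        [⟨R, Γ, (x, A) ::ₘ Δ⟩, ⟨R, (x, A) ::ₘ Γ', Δ'⟩]
  | wkL (R : Set (ℕ × ℕ)) (Γ Δ : Multiset LFormula) (x : ℕ) (A : Formula) :
      Rule tr thn ir ⟨R, (x, A) ::ₘ Γ, Δ⟩ [⟨R, Γ, Δ⟩]
  | wkR (R : Set (ℕ × ℕ)) (Γ Δ : Multiset LFormula) (x : ℕ) (A : Formula) :
      Rule tr thn ir ⟨R, Γ, (x, A) ::ₘ Δ⟩ [⟨R, Γ, Δ⟩]
  | ctrL (R : Set (ℕ × ℕ)) (Γ Δ : Multiset LFormula) (x : ℕ) (A : Formula) :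
      Rule tr thn ir ⟨R, (x, A) ::ₘ Γ, Δ⟩ [⟨R, (x, A) ::ₘ (x, A) ::ₘ Γ, Δ⟩]
  | ctrR (R : Set (ℕ × ℕ)) (Γ Δ : Multiset LFormula) (x : ℕ) (A : Formula) :
      Rule tr thn ir ⟨R, Γ, (x, A) ::ₘ Δ⟩ [⟨R, Γ, (x, A) ::ₘ (x, A) ::ₘ Δ⟩]
  | th (R R' : Set (ℕ × ℕ)) (Γ Δ : Multiset LFormula) :
      thn = true → Rule tr thn ir ⟨R ∪ R', Γ, Δ⟩ [⟨R, Γ, Δ⟩]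
  | botL (R : Set (ℕ × ℕ)) (Γ Δ : Multiset LFormula) (x : ℕ) :
      Rule tr thn ir ⟨R, (x, Formula.bot) ::ₘ Γ, Δ⟩ []
  | impL (R : Set (ℕ × ℕ)) (Γ Γ' Δ Δ' : Multiset LFormula) (x : ℕ) (A B : Formula) :
      Rule tr thn ir ⟨R, (x, Formula.imp A B) ::ₘ (Γ + Γ'), Δ + Δ'⟩
        [⟨R, Γ, (x, A) ::ₘ Δ⟩, ⟨R, (x, B) ::ₘ Γ', Δ'⟩]
  | impR (R : Set (ℕ × ℕ)) (Γ Δ : Multiset LFormula) (x : ℕ) (A B : Formula) :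
      (ir = true → Δ = 0) →
      Rule tr thn ir ⟨R, Γ, (x, Formula.imp A B) ::ₘ Δ⟩ [⟨R, (x, A) ::ₘ Γ, (x, B) ::ₘ Δ⟩]
  | andL₁ (R : Set (ℕ × ℕ)) (Γ Δ : Multiset LFormula) (x : ℕ) (A B : Formula) :
      Rule tr thn ir ⟨R, (x, Formula.and A B) ::ₘ Γ, Δ⟩ [⟨R, (x, A) ::ₘ Γ, Δ⟩]
  | andL₂ (R : Set (ℕ × ℕ)) (Γ Δ : Multiset LFormula) (x : ℕ) (A B : Formula) :
      Rule tr thn ir ⟨R, (x, Formula.and A B) ::ₘ Γ, Δ⟩ [⟨R, (x, B) ::ₘ Γ, Δ⟩]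
  | orL (R : Set (ℕ × ℕ)) (Γ Δ : Multiset LFormula) (x : ℕ) (A B : Formula) :
      Rule tr thn ir ⟨R, (x, Formula.or A B) ::ₘ Γ, Δ⟩
        [⟨R, (x, A) ::ₘ Γ, Δ⟩, ⟨R, (x, B) ::ₘ Γ, Δ⟩]
  | orR₁ (R : Set (ℕ × ℕ)) (Γ Δ : Multiset LFormula) (x : ℕ) (A B : Formula) :
      Rule tr thn ir ⟨R, Γ, (x, Formula.or A B) ::ₘ Δ⟩ [⟨R, Γ, (x, A) ::ₘ Δ⟩]
  | orR₂ (R : Set (ℕ × ℕ)) (Γ Δ : Multiset LFormula) (x : ℕ) (A B : Formula) :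
      Rule tr thn ir ⟨R, Γ, (x, Formula.or A B) ::ₘ Δ⟩ [⟨R, Γ, (x, B) ::ₘ Δ⟩]
  | andR (R : Set (ℕ × ℕ)) (Γ Δ : Multiset LFormula) (x : ℕ) (A B : Formula) :
      Rule tr thn ir ⟨R, Γ, (x, Formula.and A B) ::ₘ Δ⟩
        [⟨R, Γ, (x, A) ::ₘ Δ⟩, ⟨R, Γ, (x, B) ::ₘ Δ⟩]
  | diaL (R : Set (ℕ × ℕ)) (Γ Δ : Multiset LFormula) (x y : ℕ) (A : Formula) :
      Fresh y ⟨R, (x, Formula.dia A) ::ₘ Γ, Δ⟩ →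
      Rule tr thn ir ⟨R, (x, Formula.dia A) ::ₘ Γ, Δ⟩
        [⟨insert (x, y) R, (y, A) ::ₘ Γ, Δ⟩]
  | diaR (R : Set (ℕ × ℕ)) (Γ Δ : Multiset LFormula) (x y : ℕ) (A : Formula) :
      (x, y) ∈ R →
      Rule tr thn ir ⟨R, Γ, (x, Formula.dia A) ::ₘ Δ⟩ [⟨R, Γ, (y, A) ::ₘ Δ⟩]
  | boxR (R : Set (ℕ × ℕ)) (Γ Δ : Multiset LFormula) (x y : ℕ) (A : Formula) :
      (ir = true → Δ = 0) →
      Fresh y ⟨R, Γ, (x, Formula.box A) ::ₘ Δ⟩ →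
      Rule tr thn ir ⟨R, Γ, (x, Formula.box A) ::ₘ Δ⟩
        [⟨insert (x, y) R, Γ, (y, A) ::ₘ Δ⟩]
  | boxL (R : Set (ℕ × ℕ)) (Γ Δ : Multiset LFormula) (x y : ℕ) (A : Formula) :
      (x, y) ∈ R →
      Rule tr thn ir ⟨R, (x, Formula.box A) ::ₘ Γ, Δ⟩ [⟨R, (y, A) ::ₘ Γ, Δ⟩]
  | trans (R : Set (ℕ × ℕ)) (Γ Δ : Multiset LFormula) (x y z : ℕ) :
      tr = true → (x, y) ∈ R → (y, z) ∈ R →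
      Rule tr thn ir ⟨R, Γ, Δ⟩ [⟨insert (x, z) R, Γ, Δ⟩]

/-- The labelled calculus ℓK. -/
def RuleLK : Sequent → List Sequent → Prop := Rule false true false

/-- The labelled calculus ℓK4 (= ℓK + transitivity rule). -/
def RuleLK4 : Sequent → List Sequent → Prop := Rule true true false

/-- ℓK4 without the thinning rule th. -/
def RuleLK4NoTh : Sequent → List Sequent → Prop := Rule true false false

/-- The multi-succedent intuitionistic calculus mℓIK4: ℓK4 where the →-right
and □-right rules must have exactly one formula on the RHS. -/
def RuleMLIK4 : Sequent → List Sequent → Prop := Rule true true true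

/-- The single-succedent intuitionistic calculus ℓIK4: the restriction of ℓK4
to sequents with exactly one formula on the RHS. -/
def RuleLIK4 : Sequent → List Sequent → Prop :=
  fun S ps => RuleLK4 S ps ∧ SingleRHS S ∧ ∀ p ∈ ps, SingleRHS p

/-- ℓIK4 without the thinning rule th. -/
def RuleLIK4NoTh : Sequent → List Sequent → Prop :=
  fun S ps => RuleLK4NoTh S ps ∧ SingleRHS S ∧ ∀ p ∈ ps, SingleRHS p

/-- Finite (wellfounded) derivability from a set of rule instances. -/
inductive Deriv (rule : Sequent → List Sequent → Prop) : Sequent → Prop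
  | step (S : Sequent) (prems : List Sequent) :
      rule S prems → (∀ S' ∈ prems, Deriv rule S') → Deriv rule S

/-! ### Non-wellfounded proofs -/

/-- A (possibly infinite) preproof of `S₀`: a tree of sequents, given as a
partial labelling of finite paths (lists of child indices), whose root is `S₀`
and in which every node is the conclusion of a rule instance whose premisses
are exactly its children. -/
structure Preproof (rule : Sequent → List Sequent → Prop) (S₀ : Sequent) : Type where
  node : List ℕ → Option Sequent
  root : node [] = some S₀
  children : ∀ p S, node p = some S →
    ∃ prems : List Sequent, rule S prems ∧ ∀ i : ℕ, node (p ++ [i]) = prems[i]?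

/-- The path of length `n` along the branch determined by `f`. -/
def branchPath (f : ℕ → ℕ) (n : ℕ) : List ℕ := (List.range n).map f

/-- An infinite sequence of sequents (a branch) has a progressing trace:
from some point on there are labels `x i` occurring in the `i`-th sequent with
either `x (i+1) = x i` or the relational atom `(x i) R (x (i+1))` occurring in
the `i`-th sequent, the latter happening infinitely often. -/
def Progressing (Sb : ℕ → Sequent) : Prop :=
  ∃ (k : ℕ) (x : ℕ → ℕ),
    (∀ i, k ≤ i → x i ∈ (Sb i).vars) ∧
    (∀ i, k ≤ i → x (i + 1) = x i ∨ (x i, x (i + 1)) ∈ (Sb i).rel) ∧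
    (∀ n, ∃ i, n ≤ i ∧ k ≤ i ∧ (x i, x (i + 1)) ∈ (Sb i).rel)

/-- `S₀` has an ∞-proof: a preproof all of whose infinite branches have a
progressing trace. -/
def InfProof (rule : Sequent → List Sequent → Prop) (S₀ : Sequent) : Prop :=
  ∃ P : Preproof rule S₀,
    ∀ (f : ℕ → ℕ) (Sb : ℕ → Sequent),
      (∀ n, P.node (branchPath f n) = some (Sb n)) → Progressing Sb

/-! ### Birelational semantics -/

/-- A birelational model on the set of worlds `W`: an intuitionistic partial
order `le`, an accessibility relation `acc` satisfying the frame conditions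
(F1) and (F2), and a monotone valuation. -/
structure Birel (W : Type) : Type where
  le : W → W → Prop
  le_refl : ∀ w, le w w
  le_trans : ∀ u v w, le u v → le v w → le u w
  le_antisymm : ∀ u v, le u v → le v u → u = v
  acc : W → W → Prop
  F1 : ∀ w w' v, le w w' → acc w v → ∃ v', le v v' ∧ acc w' v'
  F2 : ∀ w v v', acc w v → le v v' → ∃ w', le w w' ∧ acc w' v'
  val : W → ℕ → Prop
  val_mono : ∀ w w', le w w' → ∀ p, val w p → val w' p

/-- Birelational satisfaction. -/
def bsat {W : Type} (B : Birel W) : W → Formula → Prop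
  | w, Formula.atom p  => B.val w p
  | _, Formula.bot     => False
  | w, Formula.and A C => bsat B w A ∧ bsat B w C
  | w, Formula.or  A C => bsat B w A ∨ bsat B w C
  | w, Formula.imp A C => ∀ w', B.le w w' → bsat B w' A → bsat B w' C
  | w, Formula.box A   => ∀ w' v, B.le w w' → B.acc w' v → bsat B v A
  | w, Formula.dia A   => ∃ v, B.acc w v ∧ bsat B v A

/-- Membership in the class birel-IGL: the accessibility relation is
transitive and the composite ≤;R is terminating. -/
def BirelIGL {W : Type} (B : Birel W) : Prop :=
  Transitive B.acc ∧ Terminating (fun u v => ∃ m, B.le u m ∧ B.acc m v)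

/-- An interpretation of a sequent into a birelational model: a map on labels
sending relational atoms of the sequent to accessibility-related worlds. -/
def Interp {W : Type} (B : Birel W) (I : ℕ → W) (S : Sequent) : Prop :=
  ∀ x y, (x, y) ∈ S.rel → B.acc (I x) (I y)

/-- `B, I ⊨ S`. -/
def seqSat {W : Type} (B : Birel W) (I : ℕ → W) (S : Sequent) : Prop :=
  (∀ q ∈ S.left, bsat B (I q.1) q.2) → ∃ q ∈ S.right, bsat B (I q.1) q.2

/-- `B ⊨ S`: satisfaction under every interpretation. -/
def seqValid {W : Type} (B : Birel W) (S : Sequent) : Prop :=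
  ∀ I : ℕ → W, Interp B I S → seqSat B I S

/-- Conjunction of a nonempty list of formulas `A ∧ B₁ ∧ ... ∧ Bₙ`. -/
def conjList : Formula → List Formula → Formula
  | A, [] => A
  | A, B :: l => Formula.and A (conjList B l)

/-! ### (Quasi-)trees -/

/-- A set of relational atoms is a tree: there is a root from which every
other variable is reachable by a unique path of relational atoms. -/
def IsTree (R : Set (ℕ × ℕ)) : Prop :=
  ∃ x₀ ∈ relVars R, ∀ x ∈ relVars R, x ≠ x₀ →
    ∃! l : List ℕ, l ≠ [] ∧ List.Chain (fun a b => (a, b) ∈ R) x₀ l ∧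
      l.getLast? = some x

/-- A quasi-tree: squeezed between a tree and its transitive closure. -/
def IsQuasiTree (R : Set (ℕ × ℕ)) : Prop :=
  ∃ R₀ : Set (ℕ × ℕ), IsTree R₀ ∧ R₀ ⊆ R ∧
    ∀ q ∈ R, Relation.TransGen (fun a b => (a, b) ∈ R₀) q.1 q.2

/-- The (single-succedent) sequent `R, Γ ⇒ x:A` is quasi-tree-like. -/
def QuasiTreeLike (R : Set (ℕ × ℕ)) (Γ : Multiset LFormula) (x : ℕ) : Prop :=
  (R = ∅ ∧ mLabels Γ ⊆ {x}) ∨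
  (IsQuasiTree R ∧ mLabels Γ ∪ {x} ⊆ relVars R)

/-! ### Kripke predicate structures -/

/-- A Kripke (predicate) structure: partially ordered worlds, growing nonempty
domains, monotone interpretations of the unary predicates, and growing binary
relations on the domains. -/
structure Kripke (W D : Type) : Type where
  le : W → W → Prop
  le_refl : ∀ w, le w w
  le_trans : ∀ u v w, le u v → le v w → le u w
  le_antisymm : ∀ u v, le u v → le v u → u = v
  Dom : W → Set D
  Dom_ne : ∀ w, (Dom w).Nonempty
  Dom_mono : ∀ w w', le w w' → Dom w ⊆ Dom w'
  Pr : W → ℕ → Set D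
  Pr_sub : ∀ w p, Pr w p ⊆ Dom w
  Pr_mono : ∀ w w' p, le w w' → Pr w p ⊆ Pr w' p
  Rel : W → D → D → Prop
  Rel_dom : ∀ w d e, Rel w d e → d ∈ Dom w ∧ e ∈ Dom w
  Rel_mono : ∀ w w' d e, le w w' → Rel w d e → Rel w' d e

/-- Satisfaction `K, w ⊨^ρ ⟨A⟩ₓ` of the standard translation of `A`; since the
translation of `A` at `x` has only `x` free, satisfaction is presented through
the value `d = ρ x` of the environment at `x`. -/
def ksat {W D : Type} (K : Kripke W D) : W → D → Formula → Prop
  | w, d, Formula.atom p  => d ∈ K.Pr w p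
  | _, _, Formula.bot     => False
  | w, d, Formula.and A B => ksat K w d A ∧ ksat K w d B
  | w, d, Formula.or  A B => ksat K w d A ∨ ksat K w d B
  | w, d, Formula.imp A B => ∀ w', K.le w w' → ksat K w' d A → ksat K w' d B
  | w, d, Formula.box A   => ∀ w' e, K.le w w' → K.Rel w' d e → ksat K w' e A
  | w, d, Formula.dia A   => ∃ e, K.Rel w d e ∧ ksat K w e A

/-- Membership in the class pred-IGL: each `R_w` is transitive and the
composite `≤_{D_W} ; R_{D_W}` on pairs `(w, d)` with `d ∈ D_w` is terminating. -/
def PredIGL {W D : Type} (K : Kripke W D) : Prop :=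
  (∀ w, Transitive (K.Rel w)) ∧
  ¬ ∃ (f : ℕ → W) (g : ℕ → D),
      ∀ n, g n ∈ K.Dom (f n) ∧ K.le (f n) (f (n + 1)) ∧
        K.Rel (f (n + 1)) (g n) (g (n + 1))
section Sound

open Classical

variable {W : Type} (r : W → W → Prop) (V : W → ℕ → Prop)

/-- Falsifying interpretation of a sequent in a classical model. -/
def FalsifI (I : ℕ → W) (S : Sequent) : Prop :=
  (∀ a b, (a, b) ∈ S.rel → r (I a) (I b)) ∧
  (∀ q ∈ S.left, sat r V (I q.1) q.2) ∧
  (∀ q ∈ S.right, ¬ sat r V (I q.1) q.2)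

lemma left_mem_vars {S : Sequent} {q : LFormula} (h : q ∈ S.left) : q.1 ∈ S.vars :=
  Or.inl (Or.inr ⟨q.2, h⟩)

lemma right_mem_vars {S : Sequent} {q : LFormula} (h : q ∈ S.right) : q.1 ∈ S.vars :=
  Or.inr ⟨q.2, h⟩

lemma rel_fst_mem_vars {S : Sequent} {a b : ℕ} (h : (a, b) ∈ S.rel) : a ∈ S.vars :=
  Or.inl (Or.inl ⟨b, Or.inl h⟩)

lemma rel_snd_mem_vars {S : Sequent} {a b : ℕ} (h : (a, b) ∈ S.rel) : b ∈ S.vars :=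
  Or.inl (Or.inl ⟨a, Or.inr h⟩)

/-- Local soundness: every falsifiable conclusion of an ℓK4 rule has a
falsifiable premiss, with an interpretation agreeing on the old labels. -/
lemma local_step (hT : Transitive r) {thn : Bool} {S : Sequent} {prems : List Sequent}
    (hr : Rule true thn false S prems) {I : ℕ → W} (hF : FalsifI r V I S) :
    ∃ (i : ℕ) (S' : Sequent), prems[i]? = some S' ∧
      ∃ I', FalsifI r V I' S' ∧ ∀ z ∈ S.vars, I' z = I z := by
  obtain ⟨hRel, hL, hRt⟩ := hF
  cases hr with
  | id R a p =>
      exact absurd (hL _ (Multiset.mem_singleton_self _))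
        (hRt _ (Multiset.mem_singleton_self _))
  | cut R Γ Γ' Δ Δ' a A =>
      by_cases hA : sat r V (I a) A
      · refine ⟨1, _, rfl, I, ⟨hRel, ?_, ?_⟩, fun z _ => rfl⟩
        · intro q hq
          rcases Multiset.mem_cons.1 hq with h | h
          · subst h; exact hA
          · exact hL q (Multiset.mem_add.2 (Or.inr h))
        · intro q hq; exact hRt q (Multiset.mem_add.2 (Or.inr hq))
      · refine ⟨0, _, rfl, I, ⟨hRel, ?_, ?_⟩, fun z _ => rfl⟩
        · intro q hq; exact hL q (Multiset.mem_add.2 (Or.inl hq))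
        · intro q hq
          rcases Multiset.mem_cons.1 hq with h | h
          · subst h; exact hA
          · exact hRt q (Multiset.mem_add.2 (Or.inl h))
  | wkL R Γ Δ a A =>
      exact ⟨0, _, rfl, I, ⟨hRel, fun q hq => hL q (Multiset.mem_cons_of_mem hq), hRt⟩,
        fun z _ => rfl⟩
  | wkR R Γ Δ a A =>
      exact ⟨0, _, rfl, I, ⟨hRel, hL, fun q hq => hRt q (Multiset.mem_cons_of_mem hq)⟩,
        fun z _ => rfl⟩
  | ctrL R Γ Δ a A =>
      refine ⟨0, _, rfl, I, ⟨hRel, ?_, hRt⟩, fun z _ => rfl⟩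
      intro q hq
      rcases Multiset.mem_cons.1 hq with h | h
      · subst h; exact hL _ (Multiset.mem_cons_self _ _)
      · exact hL q h
  | ctrR R Γ Δ a A =>
      refine ⟨0, _, rfl, I, ⟨hRel, hL, ?_⟩, fun z _ => rfl⟩
      intro q hq
      rcases Multiset.mem_cons.1 hq with h | h
      · subst h; exact hRt _ (Multiset.mem_cons_self _ _)
      · exact hRt q h
  | th R R' Γ Δ hthn =>
      exact ⟨0, _, rfl, I, ⟨fun a b h => hRel a b (Or.inl h), hL, hRt⟩, fun z _ => rfl⟩
  | botL R Γ Δ a =>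
      exact absurd (hL _ (Multiset.mem_cons_self _ _)) (by simp [sat])
  | impL R Γ Γ' Δ Δ' a A B =>
      have himp : sat r V (I a) (Formula.imp A B) := hL _ (Multiset.mem_cons_self _ _)
      by_cases hA : sat r V (I a) A
      · refine ⟨1, _, rfl, I, ⟨hRel, ?_, ?_⟩, fun z _ => rfl⟩
        · intro q hq
          rcases Multiset.mem_cons.1 hq with h | h
          · subst h; exact himp hA
          · exact hL q (Multiset.mem_cons_of_mem (Multiset.mem_add.2 (Or.inr h)))
        · intro q hq; exact hRt q (Multiset.mem_add.2 (Or.inr hq))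
      · refine ⟨0, _, rfl, I, ⟨hRel, ?_, ?_⟩, fun z _ => rfl⟩
        · intro q hq; exact hL q (Multiset.mem_cons_of_mem (Multiset.mem_add.2 (Or.inl hq)))
        · intro q hq
          rcases Multiset.mem_cons.1 hq with h | h
          · subst h; exact hA
          · exact hRt q (Multiset.mem_add.2 (Or.inl h))
  | impR R Γ Δ a A B hir =>
      have himp : ¬ sat r V (I a) (Formula.imp A B) := hRt _ (Multiset.mem_cons_self _ _)
      have hA : sat r V (I a) A ∧ ¬ sat r V (I a) B := by
        by_cases hA : sat r V (I a) A
        · exact ⟨hA, fun hB => himp (fun _ => hB)⟩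
        · exact absurd (fun h => absurd h hA : sat r V (I a) (Formula.imp A B)) himp
      refine ⟨0, _, rfl, I, ⟨hRel, ?_, ?_⟩, fun z _ => rfl⟩
      · intro q hq
        rcases Multiset.mem_cons.1 hq with h | h
        · subst h; exact hA.1
        · exact hL q h
      · intro q hq
        rcases Multiset.mem_cons.1 hq with h | h
        · subst h; exact hA.2
        · exact hRt q (Multiset.mem_cons_of_mem h)
  | andL₁ R Γ Δ a A B =>
      have h := hL _ (Multiset.mem_cons_self (a, Formula.and A B) Γ)
      refine ⟨0, _, rfl, I, ⟨hRel, ?_, hRt⟩, fun z _ => rfl⟩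
      intro q hq
      rcases Multiset.mem_cons.1 hq with hh | hh
      · subst hh; exact h.1
      · exact hL q (Multiset.mem_cons_of_mem hh)
  | andL₂ R Γ Δ a A B =>
      have h := hL _ (Multiset.mem_cons_self (a, Formula.and A B) Γ)
      refine ⟨0, _, rfl, I, ⟨hRel, ?_, hRt⟩, fun z _ => rfl⟩
      intro q hq
      rcases Multiset.mem_cons.1 hq with hh | hh
      · subst hh; exact h.2
      · exact hL q (Multiset.mem_cons_of_mem hh)
  | orL R Γ Δ a A B =>
      have h : sat r V (I a) A ∨ sat r V (I a) B :=
        hL _ (Multiset.mem_cons_self (a, Formula.or A B) Γ)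
      rcases h with h | h
      · refine ⟨0, _, rfl, I, ⟨hRel, ?_, hRt⟩, fun z _ => rfl⟩
        intro q hq
        rcases Multiset.mem_cons.1 hq with hh | hh
        · subst hh; exact h
        · exact hL q (Multiset.mem_cons_of_mem hh)
      · refine ⟨1, _, rfl, I, ⟨hRel, ?_, hRt⟩, fun z _ => rfl⟩
        intro q hq
        rcases Multiset.mem_cons.1 hq with hh | hh
        · subst hh; exact h
        · exact hL q (Multiset.mem_cons_of_mem hh)
  | orR₁ R Γ Δ a A B =>
      have h : ¬ (sat r V (I a) A ∨ sat r V (I a) B) :=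
        hRt _ (Multiset.mem_cons_self (a, Formula.or A B) Δ)
      refine ⟨0, _, rfl, I, ⟨hRel, hL, ?_⟩, fun z _ => rfl⟩
      intro q hq
      rcases Multiset.mem_cons.1 hq with hh | hh
      · subst hh; exact fun hA => h (Or.inl hA)
      · exact hRt q (Multiset.mem_cons_of_mem hh)
  | orR₂ R Γ Δ a A B =>
      have h : ¬ (sat r V (I a) A ∨ sat r V (I a) B) :=
        hRt _ (Multiset.mem_cons_self (a, Formula.or A B) Δ)
      refine ⟨0, _, rfl, I, ⟨hRel, hL, ?_⟩, fun z _ => rfl⟩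
      intro q hq
      rcases Multiset.mem_cons.1 hq with hh | hh
      · subst hh; exact fun hB => h (Or.inr hB)
      · exact hRt q (Multiset.mem_cons_of_mem hh)
  | andR R Γ Δ a A B =>
      have h : ¬ (sat r V (I a) A ∧ sat r V (I a) B) :=
        hRt _ (Multiset.mem_cons_self (a, Formula.and A B) Δ)
      by_cases hA : sat r V (I a) A
      · refine ⟨1, _, rfl, I, ⟨hRel, hL, ?_⟩, fun z _ => rfl⟩
        intro q hq
        rcases Multiset.mem_cons.1 hq with hh | hh
        · subst hh; exact fun hB => h ⟨hA, hB⟩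
        · exact hRt q (Multiset.mem_cons_of_mem hh)
      · refine ⟨0, _, rfl, I, ⟨hRel, hL, ?_⟩, fun z _ => rfl⟩
        intro q hq
        rcases Multiset.mem_cons.1 hq with hh | hh
        · subst hh; exact hA
        · exact hRt q (Multiset.mem_cons_of_mem hh)
  | diaL R Γ Δ a y A hy =>
      have h : ∃ v, r (I a) v ∧ sat r V v A :=
        hL _ (Multiset.mem_cons_self (a, Formula.dia A) Γ)
      obtain ⟨v, hv, hvA⟩ := h
      set S : Sequent := ⟨R, (a, Formula.dia A) ::ₘ Γ, Δ⟩ with hS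
      have hupd : ∀ z ∈ S.vars, Function.update I y v z = I z := by
        intro z hz
        exact Function.update_of_ne (fun h : z = y => hy (h ▸ hz)) _ _
      refine ⟨0, _, rfl, Function.update I y v, ⟨?_, ?_, ?_⟩, hupd⟩
      · intro c d hcd
        rcases hcd with hcd | hcd
        · obtain ⟨h1, h2⟩ := Prod.mk.injEq .. ▸ hcd
          have hc : c ∈ S.vars := h1 ▸ left_mem_vars (S := S) (q := (a, Formula.dia A)) (Multiset.mem_cons_self _ _)
          rw [hupd c hc, h2, Function.update_self, h1]
          exact hv
        · rw [hupd c (rel_fst_mem_vars (S := S) hcd), hupd d (rel_snd_mem_vars (S := S) hcd)]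
          exact hRel c d hcd
      · intro q hq
        rcases Multiset.mem_cons.1 hq with hh | hh
        · subst hh; simpa [Function.update_self] using hvA
        · rw [hupd q.1 (left_mem_vars (Multiset.mem_cons_of_mem hh))]
          exact hL q (Multiset.mem_cons_of_mem hh)
      · intro q hq
        rw [hupd q.1 (right_mem_vars hq)]
        exact hRt q hq
  | diaR R Γ Δ a y A hxy =>
      have h : ¬ ∃ v, r (I a) v ∧ sat r V v A :=
        hRt _ (Multiset.mem_cons_self (a, Formula.dia A) Δ)
      refine ⟨0, _, rfl, I, ⟨hRel, hL, ?_⟩, fun z _ => rfl⟩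
      intro q hq
      rcases Multiset.mem_cons.1 hq with hh | hh
      · subst hh; exact fun hA => h ⟨I y, hRel a y hxy, hA⟩
      · exact hRt q (Multiset.mem_cons_of_mem hh)
  | boxR R Γ Δ a y A hir hy =>
      have h : ¬ ∀ v, r (I a) v → sat r V v A :=
        hRt _ (Multiset.mem_cons_self (a, Formula.box A) Δ)
      have h' : ∃ v, r (I a) v ∧ ¬ sat r V v A := by
        by_contra hc
        push_neg at hc
        exact h hc
      obtain ⟨v, hv, hvA⟩ := h'
      set S : Sequent := ⟨R, Γ, (a, Formula.box A) ::ₘ Δ⟩ with hS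
      have hupd : ∀ z ∈ S.vars, Function.update I y v z = I z := by
        intro z hz
        exact Function.update_of_ne (fun h : z = y => hy (h ▸ hz)) _ _
      refine ⟨0, _, rfl, Function.update I y v, ⟨?_, ?_, ?_⟩, hupd⟩
      · intro c d hcd
        rcases hcd with hcd | hcd
        · obtain ⟨h1, h2⟩ := Prod.mk.injEq .. ▸ hcd
          have hc : c ∈ S.vars := h1 ▸ right_mem_vars (S := S) (q := (a, Formula.box A)) (Multiset.mem_cons_self _ _)
          rw [hupd c hc, h2, Function.update_self, h1]
          exact hv
        · rw [hupd c (rel_fst_mem_vars (S := S) hcd), hupd d (rel_snd_mem_vars (S := S) hcd)]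
          exact hRel c d hcd
      · intro q hq
        rw [hupd q.1 (left_mem_vars hq)]
        exact hL q hq
      · intro q hq
        rcases Multiset.mem_cons.1 hq with hh | hh
        · subst hh; simpa [Function.update_self] using hvA
        · rw [hupd q.1 (right_mem_vars (Multiset.mem_cons_of_mem hh))]
          exact hRt q (Multiset.mem_cons_of_mem hh)
  | boxL R Γ Δ a y A hxy =>
      have h : ∀ v, r (I a) v → sat r V v A :=
        hL _ (Multiset.mem_cons_self (a, Formula.box A) Γ)
      refine ⟨0, _, rfl, I, ⟨hRel, ?_, hRt⟩, fun z _ => rfl⟩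
      intro q hq
      rcases Multiset.mem_cons.1 hq with hh | hh
      · subst hh; exact h _ (hRel a y hxy)
      · exact hL q (Multiset.mem_cons_of_mem hh)
  | trans R Γ Δ a y z htr hxy hyz =>
      refine ⟨0, _, rfl, I, ⟨?_, hL, hRt⟩, fun z _ => rfl⟩
      intro c d hcd
      rcases hcd with hcd | hcd
      · rw [show c = a from congrArg Prod.fst hcd, show d = z from congrArg Prod.snd hcd]
        exact hT (hRel a y hxy) (hRel y z hyz)
      · exact hRel c d hcd


/-- From an ∞-proof and a falsifying interpretation of the root, extract an
infinite path in the model's accessibility relation. -/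
lemma infinite_path {W : Type} (r : W → W → Prop) (V : W → ℕ → Prop)
    (hT : Transitive r) (S₀ : Sequent) (hp : InfProof RuleLK4 S₀)
    (I₀ : ℕ → W) (h₀ : FalsifI r V I₀ S₀) :
    ∃ f : ℕ → W, ∀ n, r (f n) (f (n + 1)) := by
  classical
  obtain ⟨P, hprog⟩ := hp
  -- states: a node of the preproof together with a falsifying interpretation
  let T := {t : List ℕ × Sequent × (ℕ → W) //
    P.node t.1 = some t.2.1 ∧ FalsifI r V t.2.2 t.2.1}
  have step : ∀ t : T, ∃ (t' : T) (i : ℕ), t'.val.1 = t.val.1 ++ [i] ∧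
      ∀ z ∈ t.val.2.1.vars, t'.val.2.2 z = t.val.2.2 z := by
    rintro ⟨⟨p, S, I⟩, hnode, hF⟩
    obtain ⟨prems, hrule, hch⟩ := P.children p S hnode
    obtain ⟨i, S', hi, I', hF', hagree⟩ := local_step r V hT hrule hF
    have hnode' : P.node (p ++ [i]) = some S' := by rw [hch i, hi]
    exact ⟨⟨(p ++ [i], S', I'), hnode', hF'⟩, i, rfl, hagree⟩
  choose nxt idx hpath hagree using step
  let st : ℕ → T := fun n => Nat.rec ⟨([], S₀, I₀), P.root, h₀⟩ (fun _ t => nxt t) n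
  have hst : ∀ n, st (n + 1) = nxt (st n) := fun n => rfl
  let f : ℕ → ℕ := fun n => idx (st n)
  have hbp : ∀ n, (st n).val.1 = branchPath f n := by
    intro n
    induction n with
    | zero => simp [branchPath, st]
    | succ n ih =>
        rw [hst n, hpath (st n), ih]
        simp [branchPath, List.range_succ, f]
  let Sb : ℕ → Sequent := fun n => (st n).val.2.1
  let In : ℕ → (ℕ → W) := fun n => (st n).val.2.2
  have hFn : ∀ n, FalsifI r V (In n) (Sb n) := fun n => (st n).2.2
  have hIagree : ∀ n, ∀ z ∈ (Sb n).vars, In (n + 1) z = In n z := by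
    intro n z hz
    have := hagree (st n) z hz
    rw [← hst n] at this
    exact this
  have hnode : ∀ n, P.node (branchPath f n) = some (Sb n) := by
    intro n; rw [← hbp n]; exact (st n).2.1
  obtain ⟨k, x, hx1, hx2, hx3⟩ := hprog f Sb hnode
  let w : ℕ → W := fun n => In n (x n)
  -- the relational step in a trace induces an accessibility step in the model
  have hrelstep : ∀ i, k ≤ i → (x i, x (i + 1)) ∈ (Sb i).rel → r (w i) (w (i + 1)) := by
    intro i hk hrel
    have h1 : r (In i (x i)) (In i (x (i + 1))) := (hFn i).1 _ _ hrel
    have h2 : In (i + 1) (x (i + 1)) = In i (x (i + 1)) :=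
      hIagree i _ (rel_snd_mem_vars (S := Sb i) hrel)
    show r (In i (x i)) (In (i + 1) (x (i + 1)))
    rw [h2]; exact h1
  have heqstep : ∀ i, k ≤ i → x (i + 1) = x i → w (i + 1) = w i := by
    intro i hk hxe
    show In (i + 1) (x (i + 1)) = In i (x i)
    rw [hxe]
    exact hIagree i _ (hx1 i hk)
  -- monotonicity along the trace, using transitivity
  have hmono : ∀ i j, k ≤ i → i ≤ j → w i = w j ∨ r (w i) (w j) := by
    intro i j hki hij
    induction j, hij using Nat.le_induction with
    | base => exact Or.inl rfl
    | succ j hij ih =>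
        have hkj : k ≤ j := le_trans hki hij
        rcases hx2 j hkj with he | hr
        · rcases ih with h | h
          · exact Or.inl (h.trans (heqstep j hkj he).symm)
          · exact Or.inr ((heqstep j hkj he) ▸ h)
        · rcases ih with h | h
          · exact Or.inr (h ▸ hrelstep j hkj hr)
          · exact Or.inr (hT h (hrelstep j hkj hr))
  -- indices of relational steps
  let g : ℕ → ℕ := fun n => Nat.rec (hx3 k).choose (fun _ m => (hx3 (m + 1)).choose) n
  have hg0 : k ≤ g 0 ∧ (x (g 0), x (g 0 + 1)) ∈ (Sb (g 0)).rel := by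
    obtain ⟨h1, h2, h3⟩ := (hx3 k).choose_spec
    exact ⟨h2, h3⟩
  have hgs : ∀ n, (g n + 1 ≤ g (n + 1)) ∧ k ≤ g (n + 1) ∧
      (x (g (n + 1)), x (g (n + 1) + 1)) ∈ (Sb (g (n + 1))).rel := by
    intro n
    obtain ⟨h1, h2, h3⟩ := (hx3 (g n + 1)).choose_spec
    exact ⟨h1, h2, h3⟩
  have hgk : ∀ n, k ≤ g n ∧ (x (g n), x (g n + 1)) ∈ (Sb (g n)).rel := by
    intro n
    cases n with
    | zero => exact hg0
    | succ n => exact ⟨(hgs n).2.1, (hgs n).2.2⟩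
  refine ⟨fun n => w (g n), ?_⟩
  intro n
  have h1 : r (w (g n)) (w (g n + 1)) := hrelstep _ (hgk n).1 (hgk n).2
  have h2 := hmono (g n + 1) (g (n + 1)) (le_trans (hgk n).1 (Nat.le_succ _)) (hgs n).1
  show r (w (g n)) (w (g (n + 1)))
  rcases h2 with h | h
  · exact h ▸ h1
  · exact hT h1 h

end Sound


/-- **Soundness of ℓGL.** If there is an ∞-proof in ℓK4 of `∅ ⇒ x:A` then every
relational model with transitive and terminating accessibility relation
satisfies `A` at every world; equivalently, from an ∞-proof of `∅ ⇒ x:A` and a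
transitive model falsifying `A` somewhere one obtains an infinite path along
the accessibility relation. -/
theorem lGL_sound (A : Formula) (x : ℕ) :
    (InfProof RuleLK4 ⟨∅, 0, {(x, A)}⟩ →
      ∀ (W : Type) (R : W → W → Prop) (V : W → ℕ → Prop), Nonempty W →
        Transitive R → Terminating R → ∀ w, sat R V w A) ∧
    (InfProof RuleLK4 ⟨∅, 0, {(x, A)}⟩ →
      ∀ (W : Type) (R : W → W → Prop) (V : W → ℕ → Prop), Nonempty W →
        Transitive R → ∀ w, ¬ sat R V w A →
          ∃ f : ℕ → W, ∀ n, R (f n) (f (n + 1))) := by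



  have main : InfProof RuleLK4 ⟨∅, 0, {(x, A)}⟩ →
      ∀ (W : Type) (R : W → W → Prop) (V : W → ℕ → Prop),
        Transitive R → ∀ w, ¬ sat R V w A →
          ∃ f : ℕ → W, ∀ n, R (f n) (f (n + 1)) := by
    intro hp W R V hT w hns
    refine infinite_path R V hT _ hp (fun _ => w) ⟨?_, ?_, ?_⟩
    · intro a b h; exact absurd h (Set.notMem_empty _)
    · intro q hq; exact absurd hq (Multiset.notMem_zero q)
    · intro q hq
      have hq' : q = (x, A) := Multiset.mem_singleton.1 hq
      subst hq'; exact hns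
  constructor
  · intro hp W R V _ hT hterm w
    by_contra hns
    exact hterm (main hp W R V hT w hns)
  · intro hp W R V _ hT w hns
    exact main hp W R V hT w hns

end IGL
end

section
/- (Completeness of ℓGL.) If A is a theorem of Gödel–Löb logic GL, then there is an ∞-proof in ℓK4 of the sequent ∅ ⇒ x:A, i.e. ℓGL ⊢ x:A. In particular ℓGL derives Löb's axiom □(□A→A)→□A and is closed under modus ponens (via cut) and necessitation (via □-right). -/
namespace IGL

/-! ### Infrastructure for ∞-proofs -/

lemma progressing_shift (Sb : ℕ → Sequent) (m : ℕ)
    (h : Progressing (fun n => Sb (n + m))) : Progressing Sb := by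
  obtain ⟨k, t, h1, h2, h3⟩ := h
  refine ⟨k + m, fun n => t (n - m), ?_, ?_, ?_⟩
  · intro i hi
    have e : i - m + m = i := by omega
    have := h1 (i - m) (by omega)
    simpa [e] using this
  · intro i hi
    have e : i - m + m = i := by omega
    have e2 : i + 1 - m = (i - m) + 1 := by omega
    have := h2 (i - m) (by omega)
    show t (i + 1 - m) = t (i - m) ∨ (t (i - m), t (i + 1 - m)) ∈ (Sb i).rel
    rw [e2]
    simpa [e] using this
  · intro n
    obtain ⟨i, hni, hki, hrel⟩ := h3 n
    refine ⟨i + m, by omega, by omega, ?_⟩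
    have e : i + m - m = i := by omega
    have e2 : i + m + 1 - m = i + 1 := by omega
    simpa [e, e2] using hrel

lemma branchPath_zero (f : ℕ → ℕ) : branchPath f 0 = [] := rfl

lemma branchPath_succ (f : ℕ → ℕ) (n : ℕ) :
    branchPath f (n + 1) = f 0 :: branchPath (fun k => f (k + 1)) n := by
  simp [branchPath, List.range_succ_eq_map, List.map_map, Function.comp]

/-- A node function with the children and progressing-branch properties. -/
def GoodNode (rule : Sequent → List Sequent → Prop) (nd : List ℕ → Option Sequent) : Prop :=
  (∀ p S, nd p = some S → ∃ ps, rule S ps ∧ ∀ j : ℕ, nd (p ++ [j]) = ps[j]?) ∧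
  (∀ (f : ℕ → ℕ) (Sb : ℕ → Sequent),
      (∀ n, nd (branchPath f n) = some (Sb n)) → Progressing Sb)

lemma infProof_iff (rule : Sequent → List Sequent → Prop) (S : Sequent) :
    InfProof rule S ↔ ∃ nd, nd [] = some S ∧ GoodNode rule nd := by
  constructor
  · rintro ⟨P, hbr⟩
    exact ⟨P.node, P.root, P.children, hbr⟩
  · rintro ⟨nd, hroot, hch, hbr⟩
    exact ⟨⟨nd, hroot, hch⟩, hbr⟩

lemma goodNode_none (rule : Sequent → List Sequent → Prop) :
    GoodNode rule (fun _ => none) := by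
  constructor
  · intro p S h; simp at h
  · intro f Sb h; exact absurd (h 0) (by simp)

/-- choose node functions for a list of premisses. -/
lemma choose_prem_nodes (rule : Sequent → List Sequent → Prop) (prems : List Sequent)
    (hp : ∀ p ∈ prems, InfProof rule p) :
    ∃ nd : ℕ → List ℕ → Option Sequent,
      ∀ i, nd i [] = prems[i]? ∧ GoodNode rule (nd i) := by
  have key : ∀ i : ℕ, ∃ ndi : List ℕ → Option Sequent,
      ndi [] = prems[i]? ∧ GoodNode rule ndi := by
    intro i
    by_cases hi : i < prems.length
    · obtain ⟨ndi, hroot, hgood⟩ := (infProof_iff rule _).1 (hp prems[i] (prems.getElem_mem hi))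
      exact ⟨ndi, by rw [hroot, List.getElem?_eq_getElem hi], hgood⟩
    · exact ⟨fun _ => none, (List.getElem?_eq_none (by omega : prems.length ≤ i)).symm, goodNode_none rule⟩
  choose nd hnd using key
  exact ⟨nd, hnd⟩

/-- Gluing: one rule step on top of ∞-proofs of the premisses. -/
lemma infStep {rule : Sequent → List Sequent → Prop} {S : Sequent} {prems : List Sequent}
    (hr : rule S prems) (hp : ∀ p ∈ prems, InfProof rule p) : InfProof rule S := by
  obtain ⟨nd, hnd⟩ := choose_prem_nodes rule prems hp
  rw [infProof_iff]
  refine ⟨fun p => match p with | [] => some S | i :: q => nd i q, rfl, ?_, ?_⟩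
  · intro p T hT
    match p with
    | [] =>
      refine ⟨prems, by injection hT with h; rw [← h]; exact hr, fun j => ?_⟩
      show nd j [] = prems[j]?
      exact (hnd j).1
    | i :: q =>
      obtain ⟨ps, hps, hch⟩ := (hnd i).2.1 q T hT
      exact ⟨ps, hps, fun j => hch j⟩
  · intro f Sb h
    have htail : ∀ n, nd (f 0) (branchPath (fun k => f (k + 1)) n) = some (Sb (n + 1)) := by
      intro n
      have := h (n + 1)
      rw [branchPath_succ] at this
      exact this
    have := (hnd (f 0)).2.2 _ _ htail
    exact progressing_shift Sb 1 this

/-- Finite derivations yield ∞-proofs. -/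
lemma deriv_infProof {rule : Sequent → List Sequent → Prop} {S : Sequent}
    (h : Deriv rule S) : InfProof rule S := by
  induction h with
  | step S prems hr _ ih => exact infStep hr ih

/-! ### Infinite spine construction -/

/-- Node function for a proof consisting of an infinite spine whose side
premisses are given by `nd`. -/
def spNode (sp : ℕ → Sequent) (nd : ℕ → ℕ → List ℕ → Option Sequent) :
    ℕ → List ℕ → Option Sequent
  | n, [] => some (sp n)
  | n, 0 :: p => spNode sp nd (n + 1) p
  | n, (i + 1) :: p => nd n i p

lemma spNode_zeros (sp : ℕ → Sequent) (nd : ℕ → ℕ → List ℕ → Option Sequent)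
    (g : ℕ → ℕ) : ∀ (a : ℕ) (q : List ℕ) (n : ℕ), (∀ k, k < a → g k = 0) →
    spNode sp nd n ((List.range a).map g ++ q) = spNode sp nd (n + a) q := by
  intro a
  induction a with
  | zero => intro q n _; simp
  | succ a ih =>
    intro q n hg
    rw [List.range_succ, List.map_append, List.append_assoc]
    rw [ih _ n (fun k hk => hg k (by omega))]
    simp only [List.map_cons, List.map_nil, List.singleton_append, hg a (by omega)]
    show spNode sp nd (n + a + 1) q = _
    rw [Nat.add_assoc]

lemma branchPath_add (f : ℕ → ℕ) (a b : ℕ) :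
    branchPath f (a + b) = branchPath f a ++ (List.range b).map (fun k => f (a + k)) := by
  simp [branchPath, List.range_add, List.map_map, Function.comp_def]

lemma infSpine (sp : ℕ → Sequent) (rest : ℕ → List Sequent)
    {rule : Sequent → List Sequent → Prop}
    (hr : ∀ n, rule (sp n) (sp (n + 1) :: rest n))
    (hs : ∀ n p, p ∈ rest n → InfProof rule p)
    (hprog : Progressing sp) : InfProof rule (sp 0) := by
  have hchoose : ∀ n, ∃ nd : ℕ → List ℕ → Option Sequent,
      ∀ i, nd i [] = (rest n)[i]? ∧ GoodNode rule (nd i) :=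
    fun n => choose_prem_nodes rule (rest n) (hs n)
  choose nd hnd using hchoose
  rw [infProof_iff]
  refine ⟨spNode sp (fun n i => nd n i) 0, rfl, ?_, ?_⟩
  · -- children
    suffices h : ∀ (p : List ℕ) (n : ℕ) (T : Sequent), spNode sp (fun n i => nd n i) n p = some T →
        ∃ ps, rule T ps ∧ ∀ j : ℕ, spNode sp (fun n i => nd n i) n (p ++ [j]) = ps[j]? by
      intro p S hS; exact h p 0 S hS
    intro p
    induction p with
    | nil =>
      intro n T hT
      injection hT with hT
      refine ⟨sp (n + 1) :: rest n, hT ▸ hr n, fun j => ?_⟩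
      match j with
      | 0 =>
        show spNode sp (fun n i => nd n i) (n + 1) [] = _
        exact (List.getElem?_cons_zero).symm
      | j + 1 =>
        show nd n j [] = _
        rw [(hnd n j).1, List.getElem?_cons_succ]
    | cons i p ih =>
      match i with
      | 0 =>
        intro n T hT
        exact ih (n + 1) T hT
      | i + 1 =>
        intro n T hT
        obtain ⟨ps, hps, hch⟩ := ((hnd n i).2).1 p T hT
        exact ⟨ps, hps, fun j => hch j⟩
  · -- branches
    intro f Sb h
    by_cases hz : ∀ n, f n = 0
    · have hsb : ∀ n, Sb n = sp n := by
        intro n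
        have := h n
        have e : branchPath f n = (List.range n).map f ++ [] := by simp [branchPath]
        rw [e, spNode_zeros sp _ f n [] 0 (fun k _ => hz k)] at this
        injection this with this
        simpa using this.symm
      have : Sb = sp := funext hsb
      rw [this]; exact hprog
    · push_neg at hz
      have hex : ∃ n, f n ≠ 0 := hz
      set n₀ := Nat.find hex with hn₀
      have hmin : ∀ k, k < n₀ → f k = 0 := fun k hk => by
        by_contra hc
        have h2 := Nat.find_min' hex hc
        rw [← hn₀] at h2; omega
      have hfn₀ : f n₀ ≠ 0 := Nat.find_spec hex
      obtain ⟨i, hi⟩ : ∃ i, f n₀ = i + 1 := ⟨f n₀ - 1, by omega⟩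
      have htail : ∀ m, nd n₀ i (branchPath (fun k => f (n₀ + 1 + k)) m)
          = some (Sb (n₀ + 1 + m)) := by
        intro m
        have := h (n₀ + 1 + m)
        have e : branchPath f (n₀ + 1 + m)
            = (List.range n₀).map f ++ (f n₀ :: branchPath (fun k => f (n₀ + 1 + k)) m) := by
          rw [branchPath_add f (n₀ + 1) m, branchPath_add f n₀ 1]
          have : List.range 1 = [0] := rfl
          simp [branchPath, this]
        rw [e, spNode_zeros sp _ f n₀ _ 0 (fun k hk => hmin k hk), hi] at this
        simpa [spNode] using this
      have := ((hnd n₀ i).2).2 _ _ htail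
      have : Progressing (fun m => Sb (m + (n₀ + 1))) := by
        have e : (fun m => Sb (n₀ + 1 + m)) = (fun m => Sb (m + (n₀ + 1))) := by
          funext m; congr 1; omega
        rw [← e]; exact this
      exact progressing_shift Sb (n₀ + 1) this
/-! ### Finite derivations: basic lemmas -/

lemma deriv0 {S : Sequent} (hr : RuleLK4 S []) : Deriv RuleLK4 S :=
  .step S [] hr (by intro S' hS'; simp at hS')

lemma deriv1 {S P : Sequent} (hr : RuleLK4 S [P]) (h : Deriv RuleLK4 P) :
    Deriv RuleLK4 S :=
  .step S [P] hr (by intro S' hS'; simp at hS'; rw [hS']; exact h)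

lemma deriv2 {S P Q : Sequent} (hr : RuleLK4 S [P, Q]) (h1 : Deriv RuleLK4 P)
    (h2 : Deriv RuleLK4 Q) : Deriv RuleLK4 S :=
  .step S [P, Q] hr (by
    intro S' hS'; simp at hS'
    rcases hS' with h | h <;> rw [h]
    exacts [h1, h2])

lemma msAddSingleton {α : Type*} (s : Multiset α) (a : α) : s + {a} = a ::ₘ s := by
  rw [add_comm, Multiset.singleton_add]

lemma derivEq {S T : Sequent} (h : Deriv RuleLK4 S) (e : S = T) : Deriv RuleLK4 T := e ▸ h

lemma deriv_wkL (R : Set (ℕ × ℕ)) (Γ Δ : Multiset LFormula) (Γ' : Multiset LFormula)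
    (h : Deriv RuleLK4 ⟨R, Γ, Δ⟩) : Deriv RuleLK4 ⟨R, Γ' + Γ, Δ⟩ := by
  induction Γ' using Multiset.induction_on with
  | empty => simpa using h
  | cons a s ih =>
    have step : Deriv RuleLK4 ⟨R, a ::ₘ (s + Γ), Δ⟩ :=
      deriv1 (Rule.wkL R (s + Γ) Δ a.1 a.2) ih
    apply derivEq step
    simp [Multiset.cons_add]

lemma deriv_wkR (R : Set (ℕ × ℕ)) (Γ Δ : Multiset LFormula) (Δ' : Multiset LFormula)
    (h : Deriv RuleLK4 ⟨R, Γ, Δ⟩) : Deriv RuleLK4 ⟨R, Γ, Δ' + Δ⟩ := by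
  induction Δ' using Multiset.induction_on with
  | empty => simpa using h
  | cons a s ih =>
    have step : Deriv RuleLK4 ⟨R, Γ, a ::ₘ (s + Δ)⟩ :=
      deriv1 (Rule.wkR R Γ (s + Δ) a.1 a.2) ih
    apply derivEq step
    simp [Multiset.cons_add]

lemma deriv_ctrL (R : Set (ℕ × ℕ)) (Θ : Multiset LFormula) :
    ∀ (Γ Δ : Multiset LFormula), Deriv RuleLK4 ⟨R, Θ + Θ + Γ, Δ⟩ →
      Deriv RuleLK4 ⟨R, Θ + Γ, Δ⟩ := by
  induction Θ using Multiset.induction_on with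
  | empty => intro Γ Δ h; simpa using h
  | cons a s ih =>
    intro Γ Δ h
    have h' : Deriv RuleLK4 ⟨R, a ::ₘ a ::ₘ (s + s + Γ), Δ⟩ := by
      apply derivEq h
      simp [Multiset.cons_add, Multiset.add_cons, add_assoc]
    have h2 : Deriv RuleLK4 ⟨R, a ::ₘ (s + s + Γ), Δ⟩ :=
      deriv1 (Rule.ctrL R (s + s + Γ) Δ a.1 a.2) h'
    have h3 : Deriv RuleLK4 ⟨R, s + s + (a ::ₘ Γ), Δ⟩ := by
      apply derivEq h2
      simp [Multiset.cons_add, Multiset.add_cons, add_assoc]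
    have h4 := ih (a ::ₘ Γ) Δ h3
    apply derivEq h4
    simp [Multiset.cons_add, Multiset.add_cons, add_assoc]

lemma deriv_ctrR (R : Set (ℕ × ℕ)) (Θ : Multiset LFormula) :
    ∀ (Γ Δ : Multiset LFormula), Deriv RuleLK4 ⟨R, Γ, Θ + Θ + Δ⟩ →
      Deriv RuleLK4 ⟨R, Γ, Θ + Δ⟩ := by
  induction Θ using Multiset.induction_on with
  | empty => intro Γ Δ h; simpa using h
  | cons a s ih =>
    intro Γ Δ h
    have h' : Deriv RuleLK4 ⟨R, Γ, a ::ₘ a ::ₘ (s + s + Δ)⟩ := by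
      apply derivEq h
      simp [Multiset.cons_add, Multiset.add_cons, add_assoc]
    have h2 : Deriv RuleLK4 ⟨R, Γ, a ::ₘ (s + s + Δ)⟩ :=
      deriv1 (Rule.ctrR R Γ (s + s + Δ) a.1 a.2) h'
    have h3 : Deriv RuleLK4 ⟨R, Γ, s + s + (a ::ₘ Δ)⟩ := by
      apply derivEq h2
      simp [Multiset.cons_add, Multiset.add_cons, add_assoc]
    have h4 := ih Γ (a ::ₘ Δ) h3
    apply derivEq h4
    simp [Multiset.cons_add, Multiset.add_cons, add_assoc]

/-! ### Identity sequents -/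

lemma fresh_single (R : Set (ℕ × ℕ)) {N a b : ℕ} (A B : Formula)
    (hR : ∀ p ∈ R, p.1 < N ∧ p.2 < N) (ha : a < N) (hb : b < N) :
    Fresh N ⟨R, {(a, A)}, {(b, B)}⟩ := by
  intro hmem
  simp only [Sequent.vars, relVars, mLabels, Set.mem_union, Set.mem_setOf_eq] at hmem
  rcases hmem with (⟨w, hw | hw⟩ | ⟨C, hC⟩) | ⟨C, hC⟩
  · exact absurd (hR _ hw).1 (by omega)
  · exact absurd (hR _ hw).2 (by omega)
  · rw [Multiset.mem_singleton] at hC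
    have := congrArg Prod.fst hC; simp at this; omega
  · rw [Multiset.mem_singleton] at hC
    have := congrArg Prod.fst hC; simp at this; omega

lemma deriv_id (A : Formula) : ∀ (R : Set (ℕ × ℕ)) (y N : ℕ),
    (∀ p ∈ R, p.1 < N ∧ p.2 < N) →
    Deriv RuleLK4 ⟨R, {(y, A)}, {(y, A)}⟩ := by
  induction A with
  | atom p =>
    intro R y N hN
    exact deriv0 (Rule.id R y p)
  | bot =>
    intro R y N hN
    exact deriv0 (Rule.botL R 0 {(y, Formula.bot)} y)
  | and A B ihA ihB =>
    intro R y N hN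
    refine deriv2 (Rule.andR R {(y, Formula.and A B)} 0 y A B) ?_ ?_
    · exact deriv1 (Rule.andL₁ R 0 {(y, A)} y A B) (ihA R y N hN)
    · exact deriv1 (Rule.andL₂ R 0 {(y, B)} y A B) (ihB R y N hN)
  | or A B ihA ihB =>
    intro R y N hN
    refine deriv2 (Rule.orL R 0 {(y, Formula.or A B)} y A B) ?_ ?_
    · exact deriv1 (Rule.orR₁ R {(y, A)} 0 y A B) (ihA R y N hN)
    · exact deriv1 (Rule.orR₂ R {(y, B)} 0 y A B) (ihB R y N hN)
  | imp A B ihA ihB =>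
    intro R y N hN
    refine deriv1 (Rule.impR R {(y, Formula.imp A B)} 0 y A B (by simp)) ?_
    have main : Deriv RuleLK4 ⟨R, (y, Formula.imp A B) ::ₘ ({(y, A)} + 0), 0 + {(y, B)}⟩ := by
      refine deriv2 (Rule.impL R {(y, A)} 0 0 {(y, B)} y A B) ?_ ?_
      · exact derivEq (ihA R y N hN) (by simp)
      · exact ihB R y N hN
    apply derivEq main
    simp only [Sequent.mk.injEq, add_zero, zero_add, true_and, and_true]
    exact ⟨Multiset.cons_swap (y, Formula.imp A B) (y, A) 0, rfl⟩
  | box A ih =>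
    intro R y N hN
    set z := max N (y + 1) with hz
    have hRz : ∀ p ∈ R, p.1 < z ∧ p.2 < z := fun p hp =>
      ⟨by have := (hN p hp).1; omega, by have := (hN p hp).2; omega⟩
    refine deriv1 (Rule.boxR R {(y, Formula.box A)} 0 y z A (by simp)
      (fresh_single R _ _ hRz (by omega) (by omega))) ?_
    refine deriv1 (Rule.boxL (insert (y, z) R) 0 {(z, A)} y z A (Set.mem_insert _ _)) ?_
    refine ih (insert (y, z) R) z (z + 1) ?_
    intro p hp
    rcases hp with hp | hp
    · rw [hp]; constructor <;> simp <;> omega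
    · have := hRz p hp; omega
  | dia A ih =>
    intro R y N hN
    set z := max N (y + 1) with hz
    have hRz : ∀ p ∈ R, p.1 < z ∧ p.2 < z := fun p hp =>
      ⟨by have := (hN p hp).1; omega, by have := (hN p hp).2; omega⟩
    refine deriv1 (Rule.diaL R 0 {(y, Formula.dia A)} y z A
      (fresh_single R _ _ hRz (by omega) (by omega))) ?_
    refine deriv1 (Rule.diaR (insert (y, z) R) {(z, A)} 0 y z A (Set.mem_insert _ _)) ?_
    refine ih (insert (y, z) R) z (z + 1) ?_
    intro p hp
    rcases hp with hp | hp
    · rw [hp]; constructor <;> simp <;> omega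
    · have := hRz p hp; omega
/-! ### Completeness for propositional tautologies -/

def psize : Formula → ℕ
  | Formula.and A B => psize A + psize B + 1
  | Formula.or A B => psize A + psize B + 1
  | Formula.imp A B => psize A + psize B + 1
  | _ => 0

/-- Semantic entailment between multisets of formulas. -/
def semEnt (Γ Δ : Multiset Formula) : Prop :=
  ∀ v, (∃ A ∈ Γ, evalCPL v A = false) ∨ (∃ A ∈ Δ, evalCPL v A = true)

lemma prop_complete_aux : ∀ (m : ℕ) (Γ Δ : Multiset Formula) (x : ℕ),
    (Γ.map psize).sum + (Δ.map psize).sum ≤ m → semEnt Γ Δ →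
    Deriv RuleLK4 ⟨∅, Γ.map (fun A => (x, A)), Δ.map (fun A => (x, A))⟩ := by
  intro m
  induction m using Nat.strong_induction_on with
  | _ m IH =>
  intro Γ Δ x hm hsem
  by_cases hL : ∃ A ∈ Γ, 0 < psize A
  · obtain ⟨A, hA, hps⟩ := hL
    obtain ⟨Γ', rfl⟩ := Multiset.exists_cons_of_mem hA
    have hmeas : psize A + (Γ'.map psize).sum + (Δ.map psize).sum ≤ m := by
      simpa [add_assoc] using hm
    cases A with
    | atom p => simp [psize] at hps
    | bot => simp [psize] at hps
    | box A => simp [psize] at hps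
    | dia A => simp [psize] at hps
    | and A B =>
      have hp : psize (Formula.and A B) = psize A + psize B + 1 := rfl
      have d1 : Deriv RuleLK4 ⟨∅, (B ::ₘ A ::ₘ Γ').map (fun C => (x, C)),
          Δ.map (fun C => (x, C))⟩ := by
        refine IH (m - 1) (by omega) _ _ x (by simp [psize]; omega) ?_
        intro v
        rcases hsem v with ⟨C, hC, hf⟩ | ⟨C, hC, ht⟩
        · rcases Multiset.mem_cons.1 hC with rfl | hC
          · simp only [evalCPL, Bool.and_eq_false_iff] at hf
            rcases hf with hf | hf
            · exact Or.inl ⟨A, by simp, hf⟩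
            · exact Or.inl ⟨B, by simp, hf⟩
          · exact Or.inl ⟨C, by simp [hC], hf⟩
        · exact Or.inr ⟨C, hC, ht⟩
      have d2 : Deriv RuleLK4 ⟨∅, (x, Formula.and A B) ::ₘ (x, A) ::ₘ
          Γ'.map (fun C => (x, C)), Δ.map (fun C => (x, C))⟩ := by
        refine deriv1 (Rule.andL₂ ∅ ((x, A) ::ₘ Γ'.map (fun C => (x, C))) _ x A B) ?_
        apply derivEq d1
        simp [Sequent.mk.injEq, Multiset.cons_swap]
      have d3 : Deriv RuleLK4 ⟨∅, (x, Formula.and A B) ::ₘ (x, Formula.and A B) ::ₘ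
          Γ'.map (fun C => (x, C)), Δ.map (fun C => (x, C))⟩ := by
        refine deriv1 (Rule.andL₁ ∅ ((x, Formula.and A B) ::ₘ Γ'.map (fun C => (x, C)))
          _ x A B) ?_
        apply derivEq d2
        simp [Sequent.mk.injEq, Multiset.cons_swap]
      have d4 := deriv1 (Rule.ctrL ∅ (Γ'.map (fun C => (x, C))) (Δ.map (fun C => (x, C)))
        x (Formula.and A B)) d3
      apply derivEq d4
      simp
    | or A B =>
      have hp : psize (Formula.or A B) = psize A + psize B + 1 := rfl
      have mk : ∀ (E : Formula) (Θ : Multiset Formula),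
          (E ::ₘ Θ).map (fun C => (x, C)) = (x, E) ::ₘ Θ.map (fun C => (x, C)) := by
        intro E Θ; simp
      have d1 : Deriv RuleLK4 ⟨∅, (A ::ₘ Γ').map (fun C => (x, C)),
          Δ.map (fun C => (x, C))⟩ := by
        refine IH (m - 1) (by omega) _ _ x (by simp [psize]; omega) ?_
        intro v
        rcases hsem v with ⟨C, hC, hf⟩ | ⟨C, hC, ht⟩
        · rcases Multiset.mem_cons.1 hC with rfl | hC
          · simp only [evalCPL, Bool.or_eq_false_iff] at hf
            exact Or.inl ⟨A, by simp, hf.1⟩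
          · exact Or.inl ⟨C, by simp [hC], hf⟩
        · exact Or.inr ⟨C, hC, ht⟩
      have d2 : Deriv RuleLK4 ⟨∅, (B ::ₘ Γ').map (fun C => (x, C)),
          Δ.map (fun C => (x, C))⟩ := by
        refine IH (m - 1) (by omega) _ _ x (by simp [psize]; omega) ?_
        intro v
        rcases hsem v with ⟨C, hC, hf⟩ | ⟨C, hC, ht⟩
        · rcases Multiset.mem_cons.1 hC with rfl | hC
          · simp only [evalCPL, Bool.or_eq_false_iff] at hf
            exact Or.inl ⟨B, by simp, hf.2⟩
          · exact Or.inl ⟨C, by simp [hC], hf⟩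
        · exact Or.inr ⟨C, hC, ht⟩
      have d := deriv2 (Rule.orL ∅ (Γ'.map (fun C => (x, C))) (Δ.map (fun C => (x, C)))
        x A B) (derivEq d1 (by simp)) (derivEq d2 (by simp))
      apply derivEq d
      simp
    | imp A B =>
      have hp : psize (Formula.imp A B) = psize A + psize B + 1 := rfl
      have d1 : Deriv RuleLK4 ⟨∅, Γ'.map (fun C => (x, C)),
          (x, A) ::ₘ Δ.map (fun C => (x, C))⟩ := by
        have := IH (m - 1) (by omega) Γ' (A ::ₘ Δ) x (by simp [psize]; omega) ?_
        · apply derivEq this; simp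
        intro v
        rcases hsem v with ⟨C, hC, hf⟩ | ⟨C, hC, ht⟩
        · rcases Multiset.mem_cons.1 hC with rfl | hC
          · simp only [evalCPL, Bool.or_eq_false_iff, Bool.not_eq_false'] at hf
            exact Or.inr ⟨A, by simp, hf.1⟩
          · exact Or.inl ⟨C, hC, hf⟩
        · exact Or.inr ⟨C, by simp [hC], ht⟩
      have d2 : Deriv RuleLK4 ⟨∅, (x, B) ::ₘ Γ'.map (fun C => (x, C)),
          Δ.map (fun C => (x, C))⟩ := by
        have := IH (m - 1) (by omega) (B ::ₘ Γ') Δ x (by simp [psize]; omega) ?_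
        · apply derivEq this; simp
        intro v
        rcases hsem v with ⟨C, hC, hf⟩ | ⟨C, hC, ht⟩
        · rcases Multiset.mem_cons.1 hC with rfl | hC
          · simp only [evalCPL, Bool.or_eq_false_iff, Bool.not_eq_false'] at hf
            exact Or.inl ⟨B, by simp, hf.2⟩
          · exact Or.inl ⟨C, by simp [hC], hf⟩
        · exact Or.inr ⟨C, hC, ht⟩
      have big := deriv2 (Rule.impL ∅ (Γ'.map (fun C => (x, C))) (Γ'.map (fun C => (x, C)))
        (Δ.map (fun C => (x, C))) (Δ.map (fun C => (x, C))) x A B) d1 d2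
      have c1 : Deriv RuleLK4 ⟨∅, (x, Formula.imp A B) ::ₘ
          (Γ'.map (fun C => (x, C)) + Γ'.map (fun C => (x, C))),
          Δ.map (fun C => (x, C)) + 0⟩ :=
        deriv_ctrR ∅ (Δ.map (fun C => (x, C)))
          ((x, Formula.imp A B) ::ₘ (Γ'.map (fun C => (x, C)) + Γ'.map (fun C => (x, C))))
          0 (derivEq big (by simp))
      have c2 : Deriv RuleLK4 ⟨∅, Γ'.map (fun C => (x, C)) + {(x, Formula.imp A B)},
          Δ.map (fun C => (x, C)) + 0⟩ := by
        refine deriv_ctrL ∅ (Γ'.map (fun C => (x, C))) {(x, Formula.imp A B)}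
          (Δ.map (fun C => (x, C)) + 0) ?_
        apply derivEq c1
        simp [Multiset.add_cons, msAddSingleton, add_comm, add_assoc]
      apply derivEq c2
      simp [Multiset.add_cons, msAddSingleton, add_comm, add_assoc]
  by_cases hR : ∃ A ∈ Δ, 0 < psize A
  · obtain ⟨A, hA, hps⟩ := hR
    obtain ⟨Δ', rfl⟩ := Multiset.exists_cons_of_mem hA
    have hmeas : psize A + (Δ'.map psize).sum + (Γ.map psize).sum ≤ m := by
      simp [add_assoc] at hm ⊢; omega
    cases A with
    | atom p => simp [psize] at hps
    | bot => simp [psize] at hps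
    | box A => simp [psize] at hps
    | dia A => simp [psize] at hps
    | and A B =>
      have hp : psize (Formula.and A B) = psize A + psize B + 1 := rfl
      have d1 : Deriv RuleLK4 ⟨∅, Γ.map (fun C => (x, C)),
          (x, A) ::ₘ Δ'.map (fun C => (x, C))⟩ := by
        have := IH (m - 1) (by omega) Γ (A ::ₘ Δ') x (by simp [psize]; omega) ?_
        · apply derivEq this; simp
        intro v
        rcases hsem v with ⟨C, hC, hf⟩ | ⟨C, hC, ht⟩
        · exact Or.inl ⟨C, hC, hf⟩
        · rcases Multiset.mem_cons.1 hC with rfl | hC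
          · simp only [evalCPL, Bool.and_eq_true] at ht
            exact Or.inr ⟨A, by simp, ht.1⟩
          · exact Or.inr ⟨C, by simp [hC], ht⟩
      have d2 : Deriv RuleLK4 ⟨∅, Γ.map (fun C => (x, C)),
          (x, B) ::ₘ Δ'.map (fun C => (x, C))⟩ := by
        have := IH (m - 1) (by omega) Γ (B ::ₘ Δ') x (by simp [psize]; omega) ?_
        · apply derivEq this; simp
        intro v
        rcases hsem v with ⟨C, hC, hf⟩ | ⟨C, hC, ht⟩
        · exact Or.inl ⟨C, hC, hf⟩
        · rcases Multiset.mem_cons.1 hC with rfl | hC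
          · simp only [evalCPL, Bool.and_eq_true] at ht
            exact Or.inr ⟨B, by simp, ht.2⟩
          · exact Or.inr ⟨C, by simp [hC], ht⟩
      have d := deriv2 (Rule.andR ∅ (Γ.map (fun C => (x, C))) (Δ'.map (fun C => (x, C)))
        x A B) d1 d2
      apply derivEq d
      simp
    | imp A B =>
      have hp : psize (Formula.imp A B) = psize A + psize B + 1 := rfl
      have d1 : Deriv RuleLK4 ⟨∅, (x, A) ::ₘ Γ.map (fun C => (x, C)),
          (x, B) ::ₘ Δ'.map (fun C => (x, C))⟩ := by
        have := IH (m - 1) (by omega) (A ::ₘ Γ) (B ::ₘ Δ') x (by simp [psize]; omega) ?_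
        · apply derivEq this; simp
        intro v
        rcases hsem v with ⟨C, hC, hf⟩ | ⟨C, hC, ht⟩
        · exact Or.inl ⟨C, by simp [hC], hf⟩
        · rcases Multiset.mem_cons.1 hC with rfl | hC
          · simp only [evalCPL, Bool.or_eq_true, Bool.not_eq_true'] at ht
            rcases ht with ht | ht
            · exact Or.inl ⟨A, by simp, ht⟩
            · exact Or.inr ⟨B, by simp, ht⟩
          · exact Or.inr ⟨C, by simp [hC], ht⟩
      have d := deriv1 (Rule.impR ∅ (Γ.map (fun C => (x, C))) (Δ'.map (fun C => (x, C)))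
        x A B (by simp)) d1
      apply derivEq d
      simp
    | or A B =>
      have hp : psize (Formula.or A B) = psize A + psize B + 1 := rfl
      have d1 : Deriv RuleLK4 ⟨∅, Γ.map (fun C => (x, C)),
          (x, B) ::ₘ (x, A) ::ₘ Δ'.map (fun C => (x, C))⟩ := by
        have := IH (m - 1) (by omega) Γ (B ::ₘ A ::ₘ Δ') x (by simp [psize]; omega) ?_
        · apply derivEq this; simp
        intro v
        rcases hsem v with ⟨C, hC, hf⟩ | ⟨C, hC, ht⟩
        · exact Or.inl ⟨C, hC, hf⟩
        · rcases Multiset.mem_cons.1 hC with rfl | hC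
          · simp only [evalCPL, Bool.or_eq_true] at ht
            rcases ht with ht | ht
            · exact Or.inr ⟨A, by simp, ht⟩
            · exact Or.inr ⟨B, by simp, ht⟩
          · exact Or.inr ⟨C, by simp [hC], ht⟩
      have d2 : Deriv RuleLK4 ⟨∅, Γ.map (fun C => (x, C)),
          (x, Formula.or A B) ::ₘ (x, A) ::ₘ Δ'.map (fun C => (x, C))⟩ :=
        deriv1 (Rule.orR₂ ∅ (Γ.map (fun C => (x, C)))
          ((x, A) ::ₘ Δ'.map (fun C => (x, C))) x A B) d1
      have d3 : Deriv RuleLK4 ⟨∅, Γ.map (fun C => (x, C)),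
          (x, Formula.or A B) ::ₘ (x, Formula.or A B) ::ₘ Δ'.map (fun C => (x, C))⟩ := by
        refine deriv1 (Rule.orR₁ ∅ (Γ.map (fun C => (x, C)))
          ((x, Formula.or A B) ::ₘ Δ'.map (fun C => (x, C))) x A B) ?_
        apply derivEq d2
        simp [Sequent.mk.injEq, Multiset.cons_swap]
      have d4 := deriv1 (Rule.ctrR ∅ (Γ.map (fun C => (x, C))) (Δ'.map (fun C => (x, C)))
        x (Formula.or A B)) d3
      apply derivEq d4
      simp
  · -- base case : all formulas atomic
    push_neg at hL hR
    classical
    by_cases hbot : Formula.bot ∈ Γ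
    · obtain ⟨Γ', rfl⟩ := Multiset.exists_cons_of_mem hbot
      have d := deriv0 (Rule.botL ∅ (Γ'.map (fun C => (x, C))) (Δ.map (fun C => (x, C))) x)
      apply derivEq d
      simp
    · set v₀ : Formula → Bool := fun C => if C ∈ Γ then true else false with hv₀
      have heval : ∀ C, psize C = 0 → C ≠ Formula.bot → evalCPL v₀ C = v₀ C := by
        intro C hC hb
        cases C with
        | atom p => rfl
        | bot => exact absurd rfl hb
        | box A => rfl
        | dia A => rfl
        | and A B => simp [psize] at hC
        | or A B => simp [psize] at hC
        | imp A B => simp [psize] at hC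
      rcases hsem v₀ with ⟨A, hA, hf⟩ | ⟨A, hA, ht⟩
      · have hAb : A ≠ Formula.bot := fun h => hbot (h ▸ hA)
        have : evalCPL v₀ A = v₀ A := heval A (Nat.le_antisymm (hL A hA) (Nat.zero_le _)) hAb
        rw [this, hv₀] at hf
        simp [hA] at hf
      · have hAb : A ≠ Formula.bot := by
          intro h; rw [h] at ht; simp [evalCPL] at ht
        have : evalCPL v₀ A = v₀ A := heval A (Nat.le_antisymm (hR A hA) (Nat.zero_le _)) hAb
        rw [this, hv₀] at ht
        have hAG : A ∈ Γ := by by_contra hc; simp [hc] at ht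
        obtain ⟨Γ', rfl⟩ := Multiset.exists_cons_of_mem hAG
        obtain ⟨Δ', rfl⟩ := Multiset.exists_cons_of_mem hA
        have did : Deriv RuleLK4 ⟨∅, {(x, A)}, {(x, A)}⟩ :=
          deriv_id A ∅ x 1 (by intro p hp; simp at hp)
        have dwl := deriv_wkL ∅ {(x, A)} {(x, A)} (Γ'.map (fun C => (x, C))) did
        have dwr := deriv_wkR ∅ (Γ'.map (fun C => (x, C)) + {(x, A)}) {(x, A)}
          (Δ'.map (fun C => (x, C))) dwl
        apply derivEq dwr
        simp [msAddSingleton]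
/-! ### Tautologies, K4 axioms, mp and nec -/

lemma taut_deriv {A : Formula} (h : Taut A) (x : ℕ) :
    Deriv RuleLK4 ⟨∅, 0, {(x, A)}⟩ := by
  have d := prop_complete_aux (psize A) 0 {A} x (by simp) (fun v => Or.inr ⟨A, by simp, h v⟩)
  apply derivEq d
  simp

lemma infEq {S T : Sequent} (h : InfProof RuleLK4 S) (e : S = T) : InfProof RuleLK4 T := e ▸ h

lemma inf1 {S P : Sequent} (hr : RuleLK4 S [P]) (h : InfProof RuleLK4 P) :
    InfProof RuleLK4 S :=
  infStep hr (by intro p hp; simp at hp; rw [hp]; exact h)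

lemma inf2 {S P Q : Sequent} (hr : RuleLK4 S [P, Q]) (h1 : InfProof RuleLK4 P)
    (h2 : InfProof RuleLK4 Q) : InfProof RuleLK4 S :=
  infStep hr (by
    intro p hp; simp at hp
    rcases hp with h | h <;> rw [h]
    exacts [h1, h2])

lemma fresh_of_bound (R : Set (ℕ × ℕ)) (Γ Δ : Multiset LFormula) (N : ℕ)
    (hR : ∀ p ∈ R, p.1 < N ∧ p.2 < N) (hΓ : ∀ q ∈ Γ, q.1 < N) (hΔ : ∀ q ∈ Δ, q.1 < N) :
    Fresh N ⟨R, Γ, Δ⟩ := by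
  intro hmem
  simp only [Sequent.vars, relVars, mLabels, Set.mem_union, Set.mem_setOf_eq] at hmem
  rcases hmem with (⟨w, hw | hw⟩ | ⟨C, hC⟩) | ⟨C, hC⟩
  · exact absurd (hR _ hw).1 (by omega)
  · exact absurd (hR _ hw).2 (by omega)
  · exact absurd (hΓ (N, C) hC) (by omega)
  · exact absurd (hΔ (N, C) hC) (by omega)

lemma deriv_axK (A B : Formula) (x : ℕ) :
    Deriv RuleLK4 ⟨∅, 0, {(x, Formula.imp (Formula.box (Formula.imp A B))
      (Formula.imp (Formula.box A) (Formula.box B)))}⟩ := by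
  set y := x + 1 with hy
  set R1 : Set (ℕ × ℕ) := insert (x, y) ∅ with hR1
  have hR1b : ∀ p ∈ R1, p.1 < x + 2 ∧ p.2 < x + 2 := by
    intro p hp
    rcases hp with hp | hp
    · rw [hp]; omega
    · simp at hp
  -- leaves
  have idA : Deriv RuleLK4 ⟨R1, {(y, A)}, {(y, A)}⟩ := deriv_id A R1 y (x + 2) hR1b
  have idB : Deriv RuleLK4 ⟨R1, {(y, B)}, {(y, B)}⟩ := deriv_id B R1 y (x + 2) hR1b
  have s5 : Deriv RuleLK4 ⟨R1, (y, Formula.imp A B) ::ₘ {(y, A)}, {(y, B)}⟩ := by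
    have d := deriv2 (Rule.impL R1 {(y, A)} 0 0 {(y, B)} y A B)
      (derivEq idA (by simp)) (derivEq idB (by simp))
    apply derivEq d
    simp
  have s4 : Deriv RuleLK4 ⟨R1, (x, Formula.box (Formula.imp A B)) ::ₘ {(y, A)}, {(y, B)}⟩ :=
    deriv1 (Rule.boxL R1 {(y, A)} {(y, B)} x y (Formula.imp A B) (Set.mem_insert _ _)) s5
  have s3 : Deriv RuleLK4 ⟨R1, (x, Formula.box A) ::ₘ {(x, Formula.box (Formula.imp A B))},
      {(y, B)}⟩ := by
    refine deriv1 (Rule.boxL R1 {(x, Formula.box (Formula.imp A B))} {(y, B)} x y A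
      (Set.mem_insert _ _)) ?_
    apply derivEq s4
    simp only [Sequent.mk.injEq, true_and, and_true]
    exact Multiset.cons_swap (x, Formula.box (Formula.imp A B)) (y, A) 0
  have s2 : Deriv RuleLK4 ⟨∅, (x, Formula.box A) ::ₘ {(x, Formula.box (Formula.imp A B))},
      {(x, Formula.box B)}⟩ := by
    refine deriv1 (Rule.boxR ∅ ((x, Formula.box A) ::ₘ {(x, Formula.box (Formula.imp A B))})
      0 x y B (by simp) ?_) s3
    refine fresh_of_bound ∅ _ _ (x + 1) (by simp) ?_ ?_
    · intro q hq
      rcases Multiset.mem_cons.1 hq with rfl | hq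
      · omega
      · rw [Multiset.mem_singleton] at hq; rw [hq]; omega
    · intro q hq
      rcases Multiset.mem_cons.1 hq with rfl | hq
      · omega
      · simp at hq
  have s1 : Deriv RuleLK4 ⟨∅, {(x, Formula.box (Formula.imp A B))},
      {(x, Formula.imp (Formula.box A) (Formula.box B))}⟩ :=
    deriv1 (Rule.impR ∅ {(x, Formula.box (Formula.imp A B))} 0 x (Formula.box A)
      (Formula.box B) (by simp)) s2
  exact deriv1 (Rule.impR ∅ 0 0 x (Formula.box (Formula.imp A B))
    (Formula.imp (Formula.box A) (Formula.box B)) (by simp)) s1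

lemma deriv_ax4 (A : Formula) (x : ℕ) :
    Deriv RuleLK4 ⟨∅, 0, {(x, Formula.imp (Formula.box A) (Formula.box (Formula.box A)))}⟩ := by
  set R1 : Set (ℕ × ℕ) := insert (x, x + 1) ∅ with hR1
  set R2 : Set (ℕ × ℕ) := insert (x + 1, x + 2) R1 with hR2
  set R3 : Set (ℕ × ℕ) := insert (x, x + 2) R2 with hR3
  have hR3b : ∀ p ∈ R3, p.1 < x + 3 ∧ p.2 < x + 3 := by
    intro p hp
    rcases hp with hp | hp | hp
    · rw [hp]; omega
    · rw [hp]; omega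
    · rcases hp with hp | hp
      · rw [hp]; omega
      · simp at hp
  have t4 : Deriv RuleLK4 ⟨R3, (x + 2, A) ::ₘ 0, {(x + 2, A)}⟩ := by
    have := deriv_id A R3 (x + 2) (x + 3) hR3b
    apply derivEq this
    simp
  have t3 : Deriv RuleLK4 ⟨R3, (x, Formula.box A) ::ₘ 0, {(x + 2, A)}⟩ :=
    deriv1 (Rule.boxL R3 0 {(x + 2, A)} x (x + 2) A (Set.mem_insert _ _)) t4
  have t2 : Deriv RuleLK4 ⟨R2, {(x, Formula.box A)}, {(x + 2, A)}⟩ := by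
    refine deriv1 (Rule.trans R2 {(x, Formula.box A)} {(x + 2, A)} x (x + 1) (x + 2) rfl
      ?_ ?_) (derivEq t3 (by simp [hR3]))
    · exact Set.mem_insert_iff.2 (Or.inr (Set.mem_insert _ _))
    · exact Set.mem_insert _ _
  have t1 : Deriv RuleLK4 ⟨R1, {(x, Formula.box A)}, {(x + 1, Formula.box A)}⟩ := by
    refine deriv1 (Rule.boxR R1 {(x, Formula.box A)} 0 (x + 1) (x + 2) A (by simp) ?_) t2
    refine fresh_of_bound R1 _ _ (x + 2) ?_ ?_ ?_
    · intro p hp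
      rcases hp with hp | hp
      · rw [hp]; omega
      · simp at hp
    · intro q hq; rw [Multiset.mem_singleton] at hq; rw [hq]; omega
    · intro q hq
      rcases Multiset.mem_cons.1 hq with rfl | hq
      · omega
      · simp at hq
  have t0 : Deriv RuleLK4 ⟨∅, {(x, Formula.box A)}, {(x, Formula.box (Formula.box A))}⟩ := by
    refine deriv1 (Rule.boxR ∅ {(x, Formula.box A)} 0 x (x + 1) (Formula.box A)
      (by simp) ?_) t1
    refine fresh_of_bound ∅ _ _ (x + 1) (by simp) ?_ ?_
    · intro q hq; rw [Multiset.mem_singleton] at hq; rw [hq]; omega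
    · intro q hq
      rcases Multiset.mem_cons.1 hq with rfl | hq
      · omega
      · simp at hq
  exact deriv1 (Rule.impR ∅ 0 0 x (Formula.box A) (Formula.box (Formula.box A)) (by simp)) t0

lemma inf_mp (x : ℕ) (A B : Formula)
    (h1 : InfProof RuleLK4 ⟨∅, 0, {(x, Formula.imp A B)}⟩)
    (h2 : InfProof RuleLK4 ⟨∅, 0, {(x, A)}⟩) :
    InfProof RuleLK4 ⟨∅, 0, {(x, B)}⟩ := by
  have D1 : Deriv RuleLK4 ⟨∅, (x, Formula.imp A B) ::ₘ {(x, A)}, {(x, B)}⟩ := by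
    have idA := deriv_id A ∅ x 1 (by intro p hp; simp at hp)
    have idB := deriv_id B ∅ x 1 (by intro p hp; simp at hp)
    have d := deriv2 (Rule.impL ∅ {(x, A)} 0 0 {(x, B)} x A B)
      (derivEq idA (by simp)) (derivEq idB (by simp))
    apply derivEq d
    simp
  have G1 : InfProof RuleLK4 ⟨∅, {(x, A)}, {(x, B)}⟩ := by
    have g := inf2 (Rule.cut ∅ 0 {(x, A)} 0 {(x, B)} x (Formula.imp A B))
      (infEq h1 (by simp)) (deriv_infProof D1)
    exact infEq g (by simp)
  have g := inf2 (Rule.cut ∅ 0 0 0 {(x, B)} x A) (infEq h2 (by simp)) G1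
  exact infEq g (by simp)

lemma inf_nec' (x : ℕ) (A : Formula)
    (h : InfProof RuleLK4 ⟨∅, 0, {(x + 1, A)}⟩) :
    InfProof RuleLK4 ⟨∅, 0, {(x, Formula.box A)}⟩ := by
  have step1 : InfProof RuleLK4 ⟨insert (x, x + 1) ∅, 0, {(x + 1, A)}⟩ := by
    have g := inf1 (Rule.th ∅ {(x, x + 1)} 0 {(x + 1, A)} rfl) h
    exact infEq g (by simp [Set.union_comm])
  have g := inf1 (Rule.boxR ∅ 0 0 x (x + 1) A (by simp)
    (fresh_of_bound ∅ 0 {(x, Formula.box A)} (x + 1) (by simp) (by simp)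
      (by intro q hq; rw [Multiset.mem_singleton] at hq; rw [hq]; omega))) step1
  exact infEq g (by simp)
/-! ### The ∞-proof of Löb's axiom -/

/-- □(□A→A) -/
def lB (A : Formula) : Formula := Formula.box (Formula.imp (Formula.box A) A)

/-- Relational atoms after `n` rounds of the Löb loop. -/
def Rl (x n : ℕ) : Set (ℕ × ℕ) :=
  {p | (∃ k, 1 ≤ k ∧ k ≤ n ∧ p = (x, x + k)) ∨
       (∃ k, 1 ≤ k ∧ k + 1 ≤ n ∧ p = (x + k, x + k + 1))}

lemma Rl_mem1 {x k n : ℕ} (h1 : 1 ≤ k) (h2 : k ≤ n) : (x, x + k) ∈ Rl x n :=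
  Or.inl ⟨k, h1, h2, rfl⟩

lemma Rl_mem2 {x k n : ℕ} (h1 : 1 ≤ k) (h2 : k + 1 ≤ n) : (x + k, x + k + 1) ∈ Rl x n :=
  Or.inr ⟨k, h1, h2, rfl⟩

lemma Rl_bound {x n : ℕ} : ∀ p ∈ Rl x n, p.1 < x + n + 1 ∧ p.2 < x + n + 1 := by
  rintro p (⟨k, h1, h2, rfl⟩ | ⟨k, h1, h2, rfl⟩) <;> constructor <;> simp <;> omega

lemma Rl_one (x : ℕ) : Rl x 1 = insert (x, x + 1) ∅ := by
  ext p
  simp only [Rl, Set.mem_setOf_eq, Set.mem_insert_iff, Set.mem_empty_iff_false, or_false]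
  constructor
  · rintro (⟨k, h1, h2, rfl⟩ | ⟨k, h1, h2, rfl⟩)
    · have : k = 1 := by omega
      rw [this]
    · omega
  · rintro rfl
    exact Or.inl ⟨1, le_refl 1, le_refl 1, rfl⟩

lemma Rl_succ (x n : ℕ) :
    insert (x, x + n + 1) (insert (x + n, x + n + 1) (Rl x n)) = Rl x (n + 1) := by
  ext p
  simp only [Set.mem_insert_iff, Rl, Set.mem_setOf_eq]
  constructor
  · rintro (rfl | rfl | ⟨k, h1, h2, rfl⟩ | ⟨k, h1, h2, rfl⟩)
    · exact Or.inl ⟨n + 1, by omega, by omega, rfl⟩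
    · rcases Nat.eq_zero_or_pos n with rfl | hn
      · exact Or.inl ⟨1, le_refl 1, by omega, rfl⟩
      · exact Or.inr ⟨n, hn, by omega, rfl⟩
    · exact Or.inl ⟨k, h1, by omega, rfl⟩
    · exact Or.inr ⟨k, h1, by omega, rfl⟩
  · rintro (⟨k, h1, h2, rfl⟩ | ⟨k, h1, h2, rfl⟩)
    · by_cases hk : k = n + 1
      · subst hk; exact Or.inl rfl
      · exact Or.inr (Or.inr (Or.inl ⟨k, h1, by omega, rfl⟩))
    · by_cases hk : k = n
      · subst hk; exact Or.inr (Or.inl rfl)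
      · exact Or.inr (Or.inr (Or.inr ⟨k, h1, by omega, rfl⟩))

/-- The `r`-th sequent in the `n`-th round of the Löb loop. -/
def lBlock (x : ℕ) (A : Formula) (n r : ℕ) : Sequent :=
  match r with
  | 0 => ⟨Rl x n, {(x, lB A)}, {(x + n, A)}⟩
  | 1 => ⟨Rl x n, {(x, lB A), (x, lB A)}, {(x + n, A)}⟩
  | 2 => ⟨Rl x n, {(x + n, Formula.imp (Formula.box A) A), (x, lB A)}, {(x + n, A)}⟩
  | 3 => ⟨Rl x n, {(x, lB A)}, {(x + n, Formula.box A)}⟩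
  | _ => ⟨insert (x + n, x + n + 1) (Rl x n), {(x, lB A)}, {(x + n + 1, A)}⟩

/-- The spine of the ∞-proof of Löb's axiom. -/
def lSpine (x : ℕ) (A : Formula) (d : ℕ) : Sequent :=
  if d = 0 then ⟨∅, 0, {(x, lobAx A)}⟩
  else if d = 1 then ⟨∅, {(x, lB A)}, {(x, Formula.box A)}⟩
  else lBlock x A ((d - 2) / 5 + 1) ((d - 2) % 5)

/-- The identity side sequent in the `n`-th round. -/
def idSeq (x : ℕ) (A : Formula) (n : ℕ) : Sequent := ⟨Rl x n, {(x + n, A)}, {(x + n, A)}⟩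

/-- The side premisses of the spine. -/
def lRest (x : ℕ) (A : Formula) (d : ℕ) : List Sequent :=
  if 2 ≤ d ∧ (d - 2) % 5 = 2 then [idSeq x A ((d - 2) / 5 + 1)] else []

lemma lSpine_two (x : ℕ) (A : Formula) (d : ℕ) :
    lSpine x A (d + 2) = lBlock x A (d / 5 + 1) (d % 5) := by
  show (if d + 2 = 0 then _ else if d + 2 = 1 then _ else _) = _
  rw [if_neg (by omega), if_neg (by omega)]
  simp

lemma lob_fresh (x : ℕ) (A : Formula) (n : ℕ) :
    Fresh (x + n + 1) ⟨Rl x n, {(x, lB A)}, (x + n, Formula.box A) ::ₘ 0⟩ := by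
  refine fresh_of_bound _ _ _ _ Rl_bound ?_ ?_
  · intro q hq; rw [Multiset.mem_singleton] at hq; rw [hq]; omega
  · intro q hq
    rcases Multiset.mem_cons.1 hq with rfl | hq
    · omega
    · simp at hq

lemma lob_rule (x : ℕ) (A : Formula) (d : ℕ) :
    RuleLK4 (lSpine x A d) (lSpine x A (d + 1) :: lRest x A d) := by
  match d with
  | 0 =>
    rw [show lRest x A 0 = [] from rfl]
    exact Rule.impR ∅ 0 0 x (lB A) (Formula.box A) (by simp)
  | 1 =>
    rw [show lRest x A 1 = [] from rfl,
      show (1 + 1 : ℕ) = 0 + 2 from rfl, lSpine_two x A 0]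
    have hr := Rule.boxR (tr := true) (thn := true) (ir := false)
      ∅ {(x, lB A)} 0 x (x + 1) A (by simp)
      (fresh_of_bound ∅ _ _ (x + 1) (by simp)
        (by intro q hq; rw [Multiset.mem_singleton] at hq; rw [hq]; omega)
        (by intro q hq
            rcases Multiset.mem_cons.1 hq with rfl | hq
            · omega
            · simp at hq))
    rwa [show insert (x, x + 1) (∅ : Set (ℕ × ℕ)) = Rl x 1 from (Rl_one x).symm] at hr
  | (d + 2) =>
    obtain ⟨q, r, hr5, rfl⟩ : ∃ q r, r < 5 ∧ d = 5 * q + r :=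
      ⟨d / 5, d % 5, Nat.mod_lt _ (by omega), (Nat.div_add_mod d 5).symm⟩
    have e1 : lSpine x A (5 * q + r + 2) = lBlock x A (q + 1) r := by
      rw [lSpine_two]
      congr 1 <;> omega
    interval_cases r
    · -- ctrL
      have e2 : lSpine x A (5 * q + 0 + 2 + 1) = lBlock x A (q + 1) 1 := by
        rw [show 5 * q + 0 + 2 + 1 = (5 * q + 1) + 2 from by omega, lSpine_two]
        congr 1 <;> omega
      have e3 : lRest x A (5 * q + 0 + 2) = [] := by
        rw [lRest, if_neg]; rintro ⟨h1, h2⟩; omega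
      rw [e1, e2, e3]
      exact Rule.ctrL (Rl x (q + 1)) 0 {(x + (q + 1), A)} x (lB A)
    · -- boxL
      have e2 : lSpine x A (5 * q + 1 + 2 + 1) = lBlock x A (q + 1) 2 := by
        rw [show 5 * q + 1 + 2 + 1 = (5 * q + 2) + 2 from by omega, lSpine_two]
        congr 1 <;> omega
      have e3 : lRest x A (5 * q + 1 + 2) = [] := by
        rw [lRest, if_neg]; rintro ⟨h1, h2⟩; omega
      rw [e1, e2, e3]
      exact Rule.boxL (Rl x (q + 1)) {(x, lB A)} {(x + (q + 1), A)} x (x + (q + 1))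
        (Formula.imp (Formula.box A) A) (Rl_mem1 (by omega) (by omega))
    · -- impL
      have e2 : lSpine x A (5 * q + 2 + 2 + 1) = lBlock x A (q + 1) 3 := by
        rw [show 5 * q + 2 + 2 + 1 = (5 * q + 3) + 2 from by omega, lSpine_two]
        congr 1 <;> omega
      have e3 : lRest x A (5 * q + 2 + 2) = [idSeq x A (q + 1)] := by
        rw [lRest, if_pos ⟨by omega, by omega⟩]
        congr 2 <;> omega
      rw [e1, e2, e3]
      have hr := Rule.impL (tr := true) (thn := true) (ir := false)
        (Rl x (q + 1)) {(x, lB A)} 0 0 {(x + (q + 1), A)} (x + (q + 1)) (Formula.box A) A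
      rw [show ({(x, lB A)} : Multiset LFormula) + 0 = {(x, lB A)} from by simp,
        show (0 : Multiset LFormula) + {(x + (q + 1), A)} = {(x + (q + 1), A)} from by simp]
        at hr
      exact hr
    · -- boxR
      have e2 : lSpine x A (5 * q + 3 + 2 + 1) = lBlock x A (q + 1) 4 := by
        rw [show 5 * q + 3 + 2 + 1 = (5 * q + 4) + 2 from by omega, lSpine_two]
        congr 1 <;> omega
      have e3 : lRest x A (5 * q + 3 + 2) = [] := by
        rw [lRest, if_neg]; rintro ⟨h1, h2⟩; omega
      rw [e1, e2, e3]
      exact Rule.boxR (Rl x (q + 1)) {(x, lB A)} 0 (x + (q + 1)) (x + (q + 1) + 1) A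
        (by simp) (lob_fresh x A (q + 1))
    · -- trans
      have e2 : lSpine x A (5 * q + 4 + 2 + 1) = lBlock x A (q + 2) 0 := by
        rw [show 5 * q + 4 + 2 + 1 = (5 * (q + 1) + 0) + 2 from by omega, lSpine_two]
        congr 1 <;> omega
      have e3 : lRest x A (5 * q + 4 + 2) = [] := by
        rw [lRest, if_neg]; rintro ⟨h1, h2⟩; omega
      rw [e1, e2, e3]
      have hr := Rule.trans (tr := true) (thn := true) (ir := false)
        (insert (x + (q + 1), x + (q + 1) + 1) (Rl x (q + 1))) {(x, lB A)}
        {(x + (q + 1) + 1, A)} x (x + (q + 1)) (x + (q + 1) + 1) rfl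
        (Set.mem_insert_iff.2 (Or.inr (Rl_mem1 (by omega) (by omega))))
        (Set.mem_insert _ _)
      rw [show insert (x, x + (q + 1) + 1)
            (insert (x + (q + 1), x + (q + 1) + 1) (Rl x (q + 1))) = Rl x (q + 2) from
          Rl_succ x (q + 1)] at hr
      exact hr

lemma lob_rest (x : ℕ) (A : Formula) (d : ℕ) :
    ∀ p ∈ lRest x A d, InfProof RuleLK4 p := by
  intro p hp
  rw [lRest] at hp
  split_ifs at hp with h
  · rw [List.mem_singleton] at hp
    subst hp
    set n := (d - 2) / 5 + 1
    exact deriv_infProof (deriv_id A (Rl x n) (x + n) (x + n + 1) Rl_bound)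
  · simp at hp

lemma lob_prog (x : ℕ) (A : Formula) : Progressing (lSpine x A) := by
  refine ⟨0, fun d => x + (d + 2) / 5, ?_, ?_, ?_⟩
  · intro d _
    match d with
    | 0 =>
      show x + 0 ∈ Sequent.vars ⟨∅, 0, {(x, lobAx A)}⟩
      simp [Sequent.vars, mLabels]
    | 1 =>
      show x + 0 ∈ Sequent.vars ⟨∅, {(x, lB A)}, {(x, Formula.box A)}⟩
      simp [Sequent.vars, mLabels]
    | (d + 2) =>
      obtain ⟨q, r, hr5, rfl⟩ : ∃ q r, r < 5 ∧ d = 5 * q + r :=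
        ⟨d / 5, d % 5, Nat.mod_lt _ (by omega), (Nat.div_add_mod d 5).symm⟩
      rw [lSpine_two]
      have eq1 : (5 * q + r) / 5 = q := by omega
      have eq2 : (5 * q + r) % 5 = r := by omega
      rw [eq1, eq2]
      interval_cases r
      · -- value x + q, sequent L (q+1)
        show x + (5 * q + 0 + 2 + 2) / 5 ∈ (lBlock x A (q + 1) 0).vars
        have ev : (5 * q + 0 + 2 + 2) / 5 = q := by omega
        rw [ev]
        rcases Nat.eq_zero_or_pos q with rfl | hq
        · simp [lBlock, Sequent.vars, mLabels]
        · show x + q ∈ relVars (Rl x (q + 1)) ∪ mLabels {(x, lB A)} ∪ mLabels {(x + (q + 1), A)}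
          apply Set.mem_union_left
          apply Set.mem_union_left
          exact ⟨x, Or.inr (Rl_mem1 (k := q) (by omega) (by omega))⟩
      · show x + (5 * q + 1 + 2 + 2) / 5 ∈ (lBlock x A (q + 1) 1).vars
        have ev : (5 * q + 1 + 2 + 2) / 5 = q + 1 := by omega
        rw [ev]
        simp [lBlock, Sequent.vars, mLabels]
      · show x + (5 * q + 2 + 2 + 2) / 5 ∈ (lBlock x A (q + 1) 2).vars
        have ev : (5 * q + 2 + 2 + 2) / 5 = q + 1 := by omega
        rw [ev]
        simp [lBlock, Sequent.vars, mLabels]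
      · show x + (5 * q + 3 + 2 + 2) / 5 ∈ (lBlock x A (q + 1) 3).vars
        have ev : (5 * q + 3 + 2 + 2) / 5 = q + 1 := by omega
        rw [ev]
        simp [lBlock, Sequent.vars, mLabels]
      · show x + (5 * q + 4 + 2 + 2) / 5 ∈ (lBlock x A (q + 1) 4).vars
        have ev : (5 * q + 4 + 2 + 2) / 5 = q + 1 := by omega
        rw [ev]
        show x + (q + 1) ∈ relVars (insert (x + (q + 1), x + (q + 1) + 1) (Rl x (q + 1))) ∪
          mLabels {(x, lB A)} ∪ mLabels {(x + (q + 1) + 1, A)}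
        apply Set.mem_union_left
        apply Set.mem_union_left
        exact ⟨x + (q + 1) + 1, Or.inl (Set.mem_insert _ _)⟩
  · intro d _
    by_cases h : 2 ≤ d ∧ d % 5 = 2
    · right
      obtain ⟨q, rfl⟩ : ∃ q, d = 5 * q + 2 := ⟨d / 5, by omega⟩
      show (x + (5 * q + 2 + 2) / 5, x + (5 * q + 2 + 1 + 2) / 5) ∈ (lSpine x A (5 * q + 2)).rel
      have ev1 : (5 * q + 2 + 2) / 5 = q := by omega
      have ev2 : (5 * q + 2 + 1 + 2) / 5 = q + 1 := by omega
      rw [ev1, ev2]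
      rw [show (5 * q + 2 : ℕ) = (5 * q + 0) + 2 from by omega, lSpine_two]
      have eq1 : 5 * q / 5 = q := by omega
      have eq2 : 5 * q % 5 = 0 := by omega
      rw [eq1, eq2]
      show (x + q, x + (q + 1)) ∈ Rl x (q + 1)
      rcases Nat.eq_zero_or_pos q with rfl | hq
      · exact Rl_mem1 (by omega) (by omega)
      · have : (x + q, x + (q + 1)) = (x + q, x + q + 1) := by
          simp; omega
        rw [this]
        exact Rl_mem2 (k := q) (by omega) (by omega)
    · left
      show x + (d + 1 + 2) / 5 = x + (d + 2) / 5
      have : (d + 1 + 2) / 5 = (d + 2) / 5 := by omega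
      rw [this]
  · intro n
    refine ⟨5 * n + 2, by omega, by omega, ?_⟩
    show (x + (5 * n + 2 + 2) / 5, x + (5 * n + 2 + 1 + 2) / 5) ∈ (lSpine x A (5 * n + 2)).rel
    have ev1 : (5 * n + 2 + 2) / 5 = n := by omega
    have ev2 : (5 * n + 2 + 1 + 2) / 5 = n + 1 := by omega
    rw [ev1, ev2]
    rw [show (5 * n + 2 : ℕ) = (5 * n + 0) + 2 from by omega, lSpine_two]
    have eq1 : 5 * n / 5 = n := by omega
    have eq2 : 5 * n % 5 = 0 := by omega
    rw [eq1, eq2]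
    show (x + n, x + (n + 1)) ∈ Rl x (n + 1)
    rcases Nat.eq_zero_or_pos n with rfl | hn
    · exact Rl_mem1 (by omega) (by omega)
    · have : (x + n, x + (n + 1)) = (x + n, x + n + 1) := by
        simp; omega
      rw [this]
      exact Rl_mem2 (k := n) (by omega) (by omega)

lemma lob_inf (x : ℕ) (A : Formula) : InfProof RuleLK4 ⟨∅, 0, {(x, lobAx A)}⟩ := by
  have h0 : lSpine x A 0 = ⟨∅, 0, {(x, lobAx A)}⟩ := rfl
  rw [← h0]
  exact infSpine (lSpine x A) (lRest x A) (lob_rule x A) (lob_rest x A) (lob_prog x A)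
/-! ### Renaming of labels -/

def mapP (σ : ℕ → ℕ) (p : ℕ × ℕ) : ℕ × ℕ := (σ p.1, σ p.2)

def mapR (σ : ℕ → ℕ) (R : Set (ℕ × ℕ)) : Set (ℕ × ℕ) := mapP σ '' R

def mapF (σ : ℕ → ℕ) (q : LFormula) : LFormula := (σ q.1, q.2)

def mapSeq (σ : ℕ → ℕ) (S : Sequent) : Sequent :=
  ⟨mapR σ S.rel, S.left.map (mapF σ), S.right.map (mapF σ)⟩

@[simp] lemma mapSeq_mk (σ : ℕ → ℕ) (R : Set (ℕ × ℕ)) (Γ Δ : Multiset LFormula) :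
    mapSeq σ ⟨R, Γ, Δ⟩ = ⟨mapR σ R, Γ.map (mapF σ), Δ.map (mapF σ)⟩ := rfl

@[simp] lemma mapF_pair (σ : ℕ → ℕ) (x : ℕ) (A : Formula) :
    mapF σ (x, A) = (σ x, A) := rfl

@[simp] lemma mapR_insert (σ : ℕ → ℕ) (p : ℕ × ℕ) (R : Set (ℕ × ℕ)) :
    mapR σ (insert p R) = insert (mapP σ p) (mapR σ R) := Set.image_insert_eq

@[simp] lemma mapR_union (σ : ℕ → ℕ) (R R' : Set (ℕ × ℕ)) :
    mapR σ (R ∪ R') = mapR σ R ∪ mapR σ R' := Set.image_union _ _ _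

@[simp] lemma mapR_empty (σ : ℕ → ℕ) : mapR σ ∅ = ∅ := Set.image_empty _

@[simp] lemma mapP_pair (σ : ℕ → ℕ) (a b : ℕ) : mapP σ (a, b) = (σ a, σ b) := rfl

lemma mapR_mem {σ : ℕ → ℕ} {R : Set (ℕ × ℕ)} {a b : ℕ} (h : (a, b) ∈ R) :
    (σ a, σ b) ∈ mapR σ R := ⟨(a, b), h, rfl⟩

lemma relVars_map {σ : ℕ → ℕ} {R : Set (ℕ × ℕ)} {z : ℕ} :
    z ∈ relVars (mapR σ R) ↔ ∃ a ∈ relVars R, σ a = z := by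
  constructor
  · rintro ⟨w, hw | hw⟩
    · obtain ⟨p, hp, he⟩ := hw
      have h1 : σ p.1 = z := congrArg Prod.fst he
      exact ⟨p.1, ⟨p.2, Or.inl hp⟩, h1⟩
    · obtain ⟨p, hp, he⟩ := hw
      have h2 : σ p.2 = z := congrArg Prod.snd he
      exact ⟨p.2, ⟨p.1, Or.inr hp⟩, h2⟩
  · rintro ⟨a, ⟨w, hw | hw⟩, rfl⟩
    · exact ⟨σ w, Or.inl (mapR_mem hw)⟩
    · exact ⟨σ w, Or.inr (mapR_mem hw)⟩

lemma mLabels_map {σ : ℕ → ℕ} {Γ : Multiset LFormula} {z : ℕ} :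
    z ∈ mLabels (Γ.map (mapF σ)) ↔ ∃ a ∈ mLabels Γ, σ a = z := by
  constructor
  · rintro ⟨C, hC⟩
    obtain ⟨q, hq, he⟩ := Multiset.mem_map.1 hC
    have h1 : σ q.1 = z := congrArg Prod.fst he
    exact ⟨q.1, ⟨q.2, by simpa using hq⟩, h1⟩
  · rintro ⟨a, ⟨C, hC⟩, rfl⟩
    exact ⟨C, Multiset.mem_map.2 ⟨(a, C), hC, rfl⟩⟩

lemma vars_map {σ : ℕ → ℕ} {S : Sequent} {z : ℕ} :
    z ∈ (mapSeq σ S).vars ↔ ∃ a ∈ S.vars, σ a = z := by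
  simp only [Sequent.vars, mapSeq, Set.mem_union, relVars_map, mLabels_map]
  constructor
  · rintro ((⟨a, ha, rfl⟩ | ⟨a, ha, rfl⟩) | ⟨a, ha, rfl⟩)
    · exact ⟨a, Or.inl (Or.inl ha), rfl⟩
    · exact ⟨a, Or.inl (Or.inr ha), rfl⟩
    · exact ⟨a, Or.inr ha, rfl⟩
  · rintro ⟨a, (ha | ha) | ha, rfl⟩
    · exact Or.inl (Or.inl ⟨a, ha, rfl⟩)
    · exact Or.inl (Or.inr ⟨a, ha, rfl⟩)
    · exact Or.inr ⟨a, ha, rfl⟩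

lemma fresh_map {σ : ℕ → ℕ} (hσ : Function.Injective σ) {y : ℕ} {S : Sequent}
    (h : Fresh y S) : Fresh (σ y) (mapSeq σ S) := by
  intro hmem
  obtain ⟨a, ha, he⟩ := vars_map.1 hmem
  exact h (hσ he ▸ ha)

lemma vars_map_mem {σ : ℕ → ℕ} {S : Sequent} {a : ℕ} (h : a ∈ S.vars) :
    σ a ∈ (mapSeq σ S).vars := vars_map.2 ⟨a, h, rfl⟩

lemma rule_map {σ : ℕ → ℕ} (hσ : Function.Injective σ) {S : Sequent} {ps : List Sequent}
    (h : RuleLK4 S ps) : RuleLK4 (mapSeq σ S) (ps.map (mapSeq σ)) := by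
  cases h with
  | id R x p =>
    simp only [mapSeq_mk, Multiset.map_singleton, mapF_pair, List.map_nil]
    exact Rule.id (mapR σ R) (σ x) p
  | cut R Γ Γ' Δ Δ' x A =>
    simp only [mapSeq_mk, Multiset.map_add, Multiset.map_cons, mapF_pair, List.map_cons,
      List.map_nil]
    exact Rule.cut (mapR σ R) _ _ _ _ (σ x) A
  | wkL R Γ Δ x A =>
    simp only [mapSeq_mk, Multiset.map_cons, mapF_pair, List.map_cons, List.map_nil]
    exact Rule.wkL (mapR σ R) _ _ (σ x) A
  | wkR R Γ Δ x A =>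
    simp only [mapSeq_mk, Multiset.map_cons, mapF_pair, List.map_cons, List.map_nil]
    exact Rule.wkR (mapR σ R) _ _ (σ x) A
  | ctrL R Γ Δ x A =>
    simp only [mapSeq_mk, Multiset.map_cons, mapF_pair, List.map_cons, List.map_nil]
    exact Rule.ctrL (mapR σ R) _ _ (σ x) A
  | ctrR R Γ Δ x A =>
    simp only [mapSeq_mk, Multiset.map_cons, mapF_pair, List.map_cons, List.map_nil]
    exact Rule.ctrR (mapR σ R) _ _ (σ x) A
  | th R R' Γ Δ hthn =>
    simp only [mapSeq_mk, mapR_union, List.map_cons, List.map_nil]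
    exact Rule.th (mapR σ R) (mapR σ R') _ _ rfl
  | botL R Γ Δ x =>
    simp only [mapSeq_mk, Multiset.map_cons, mapF_pair, List.map_nil]
    exact Rule.botL (mapR σ R) _ _ (σ x)
  | impL R Γ Γ' Δ Δ' x A B =>
    simp only [mapSeq_mk, Multiset.map_add, Multiset.map_cons, mapF_pair, List.map_cons,
      List.map_nil]
    exact Rule.impL (mapR σ R) _ _ _ _ (σ x) A B
  | impR R Γ Δ x A B hir =>
    simp only [mapSeq_mk, Multiset.map_cons, mapF_pair, List.map_cons, List.map_nil]
    exact Rule.impR (mapR σ R) _ _ (σ x) A B (by simp)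
  | andL₁ R Γ Δ x A B =>
    simp only [mapSeq_mk, Multiset.map_cons, mapF_pair, List.map_cons, List.map_nil]
    exact Rule.andL₁ (mapR σ R) _ _ (σ x) A B
  | andL₂ R Γ Δ x A B =>
    simp only [mapSeq_mk, Multiset.map_cons, mapF_pair, List.map_cons, List.map_nil]
    exact Rule.andL₂ (mapR σ R) _ _ (σ x) A B
  | orL R Γ Δ x A B =>
    simp only [mapSeq_mk, Multiset.map_cons, mapF_pair, List.map_cons, List.map_nil]
    exact Rule.orL (mapR σ R) _ _ (σ x) A B
  | orR₁ R Γ Δ x A B =>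
    simp only [mapSeq_mk, Multiset.map_cons, mapF_pair, List.map_cons, List.map_nil]
    exact Rule.orR₁ (mapR σ R) _ _ (σ x) A B
  | orR₂ R Γ Δ x A B =>
    simp only [mapSeq_mk, Multiset.map_cons, mapF_pair, List.map_cons, List.map_nil]
    exact Rule.orR₂ (mapR σ R) _ _ (σ x) A B
  | andR R Γ Δ x A B =>
    simp only [mapSeq_mk, Multiset.map_cons, mapF_pair, List.map_cons, List.map_nil]
    exact Rule.andR (mapR σ R) _ _ (σ x) A B
  | diaL R Γ Δ x y A hf =>
    simp only [mapSeq_mk, Multiset.map_cons, mapF_pair, mapR_insert, mapP_pair,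
      List.map_cons, List.map_nil]
    refine Rule.diaL (mapR σ R) _ _ (σ x) (σ y) A ?_
    have := fresh_map hσ hf
    simpa using this
  | diaR R Γ Δ x y A hmem =>
    simp only [mapSeq_mk, Multiset.map_cons, mapF_pair, List.map_cons, List.map_nil]
    exact Rule.diaR (mapR σ R) _ _ (σ x) (σ y) A (mapR_mem hmem)
  | boxR R Γ Δ x y A hir hf =>
    simp only [mapSeq_mk, Multiset.map_cons, mapF_pair, mapR_insert, mapP_pair,
      List.map_cons, List.map_nil]
    refine Rule.boxR (mapR σ R) _ _ (σ x) (σ y) A (by simp) ?_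
    have := fresh_map hσ hf
    simpa using this
  | boxL R Γ Δ x y A hmem =>
    simp only [mapSeq_mk, Multiset.map_cons, mapF_pair, List.map_cons, List.map_nil]
    exact Rule.boxL (mapR σ R) _ _ (σ x) (σ y) A (mapR_mem hmem)
  | trans R Γ Δ x y z htr h1 h2 =>
    simp only [mapSeq_mk, mapR_insert, mapP_pair, List.map_cons, List.map_nil]
    exact Rule.trans (mapR σ R) _ _ (σ x) (σ y) (σ z) rfl (mapR_mem h1) (mapR_mem h2)

lemma inf_map {σ : ℕ → ℕ} (hσ : Function.Injective σ) {S : Sequent}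
    (h : InfProof RuleLK4 S) : InfProof RuleLK4 (mapSeq σ S) := by
  rw [infProof_iff] at h ⊢
  obtain ⟨nd, hroot, hch, hbr⟩ := h
  refine ⟨fun p => (nd p).map (mapSeq σ), by show (nd []).map (mapSeq σ) = _; rw [hroot]; rfl,
    ?_, ?_⟩
  · intro p T hT
    obtain ⟨U, hU, rfl⟩ := Option.map_eq_some_iff.1 hT
    obtain ⟨ps, hps, hchild⟩ := hch p U hU
    refine ⟨ps.map (mapSeq σ), rule_map hσ hps, fun j => ?_⟩
    show (nd (p ++ [j])).map (mapSeq σ) = _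
    rw [hchild j]
    exact (List.getElem?_map (f := mapSeq σ) (l := ps) (i := j)).symm
  · intro f Sb h'
    have hx : ∀ n, ∃ U, nd (branchPath f n) = some U ∧ mapSeq σ U = Sb n :=
      fun n => Option.map_eq_some_iff.1 (h' n)
    choose U hU hUe using hx
    obtain ⟨k, t, c1, c2, c3⟩ := hbr f U hU
    refine ⟨k, fun i => σ (t i), ?_, ?_, ?_⟩
    · intro i hi
      rw [← hUe i]
      exact vars_map_mem (c1 i hi)
    · intro i hi
      rcases c2 i hi with he | hm
      · exact Or.inl (congrArg σ he)
      · right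
        rw [← hUe i]
        exact mapR_mem hm
    · intro n
      obtain ⟨i, h1, h2, h3⟩ := c3 n
      refine ⟨i, h1, h2, ?_⟩
      rw [← hUe i]
      exact mapR_mem h3

lemma inf_rename (x y : ℕ) (A : Formula)
    (h : InfProof RuleLK4 ⟨∅, 0, {(x, A)}⟩) : InfProof RuleLK4 ⟨∅, 0, {(y, A)}⟩ := by
  have := inf_map (σ := Equiv.swap x y) (Equiv.swap x y).injective h
  apply infEq this
  simp [Equiv.swap_apply_left]

/-! ### Main theorem -/

lemma gl_complete_main {A : Formula} (h : GLProof A) :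
    ∀ y, InfProof RuleLK4 ⟨∅, 0, {(y, A)}⟩ := by
  induction h with
  | taut ht => exact fun y => deriv_infProof (taut_deriv ht y)
  | axK A B => exact fun y => deriv_infProof (deriv_axK A B y)
  | ax4 A => exact fun y => deriv_infProof (deriv_ax4 A y)
  | axLob A => exact fun y => lob_inf y A
  | mp h1 h2 ih1 ih2 => exact fun y => inf_mp y _ _ (ih1 y) (ih2 y)
  | nec h ih => exact fun y => inf_nec' y _ (ih (y + 1))
/-- **Completeness of ℓGL.** Every theorem of GL has an ∞-proof in ℓK4; in
particular ℓGL derives Löb's axiom and is closed under modus ponens (via cut)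
and necessitation (via □-right). -/
theorem lGL_complete (x : ℕ) :
    (∀ A : Formula, GLProof A → InfProof RuleLK4 ⟨∅, 0, {(x, A)}⟩) ∧
    (∀ A : Formula, InfProof RuleLK4 ⟨∅, 0, {(x, lobAx A)}⟩) ∧
    (∀ A B : Formula,
      InfProof RuleLK4 ⟨∅, 0, {(x, Formula.imp A B)}⟩ →
      InfProof RuleLK4 ⟨∅, 0, {(x, A)}⟩ →
      InfProof RuleLK4 ⟨∅, 0, {(x, B)}⟩) ∧
    (∀ A : Formula,
      InfProof RuleLK4 ⟨∅, 0, {(x, A)}⟩ →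
      InfProof RuleLK4 ⟨∅, 0, {(x, Formula.box A)}⟩) := by
  refine ⟨fun A h => gl_complete_main h x, fun A => lob_inf x A,
    fun A B h1 h2 => inf_mp x A B h1 h2, fun A h => ?_⟩
  exact inf_nec' x A (inf_rename x (x + 1) A h)

end IGL
end

section
/- (ℓIGL derives Löb's axiom.) There is an ∞-proof in ℓIK4 (i.e. an ∞-proof of ℓK4 in which every sequent has exactly one formula on the right-hand side) of the sequent ∅ ⇒ x: □(□A→A)→□A, for any modal formula A. Hence ℓIGL ⊢ □(□A→A)→□A. -/
namespace IGL

section LobAux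

open Classical in
/-- Extract a bounded-depth tree function from a finite derivation. -/
private theorem exists_tree {rule : Sequent → List Sequent → Prop} {S : Sequent}
    (h : Deriv rule S) :
    ∃ t : List ℕ → Option Sequent, t [] = some S ∧
      (∀ p S', t p = some S' → ∃ ps, rule S' ps ∧ ∀ i : ℕ, t (p ++ [i]) = ps[i]?) ∧
      ∃ N, ∀ p : List ℕ, N ≤ p.length → t p = none := by
  induction h with
  | step S prems hr hprem ih =>
    have H : ∀ i : ℕ, ∃ t : List ℕ → Option Sequent,
        t [] = prems[i]? ∧
        (∀ p S', t p = some S' → ∃ ps, rule S' ps ∧ ∀ k : ℕ, t (p ++ [k]) = ps[k]?) ∧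
        (∃ N, ∀ p : List ℕ, N ≤ p.length → t p = none) ∧
        (prems[i]? = none → ∀ p, t p = none) := by
      intro i
      by_cases hi : i < prems.length
      · obtain ⟨t, h1, h2, h3⟩ := ih prems[i] (List.getElem_mem hi)
        refine ⟨t, by rw [List.getElem?_eq_getElem hi]; exact h1, h2, h3, fun hn => ?_⟩
        rw [List.getElem?_eq_getElem hi] at hn; cases hn
      · refine ⟨fun _ => none, ?_, by simp, ⟨0, by simp⟩, fun _ _ => rfl⟩
        rw [List.getElem?_eq_none (Nat.le_of_not_lt hi)]
    choose g hg1 hg2 hg3 hg4 using H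
    choose Nc hNc using hg3
    refine ⟨fun p => match p with | [] => some S | i :: q => g i q, rfl, ?_, ?_⟩
    · rintro p S' hp
      match p with
      | [] =>
        cases hp
        refine ⟨prems, hr, fun i => ?_⟩
        show g i [] = prems[i]?
        exact hg1 i
      | i :: q =>
        obtain ⟨ps, h1, h2⟩ := hg2 i q S' hp
        exact ⟨ps, h1, fun k => h2 k⟩
    · refine ⟨(Finset.range prems.length).sup Nc + 1, ?_⟩
      rintro (_ | ⟨i, q⟩) hlen
      · simp at hlen
      · by_cases hi : i < prems.length
        · refine hNc i q ?_
          have : Nc i ≤ (Finset.range prems.length).sup Nc :=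
            Finset.le_sup (Finset.mem_range.mpr hi)
          simp only [List.length_cons] at hlen
          omega
        · exact hg4 i (List.getElem?_eq_none (Nat.le_of_not_lt hi)) q

/-- The node function of a preproof with a single infinite spine, all other
premisses being closed by finite derivations. -/
private def nA (Sp : ℕ → Sequent) (g : ℕ → ℕ → List ℕ → Option Sequent) :
    ℕ → List ℕ → Option Sequent
  | d, [] => some (Sp d)
  | d, 0 :: q => nA Sp g (d + 1) q
  | d, (i + 1) :: q => g d i q

private theorem nA_nil (Sp g d) : nA Sp g d [] = some (Sp d) := rfl
private theorem nA_zero (Sp g d q) : nA Sp g d (0 :: q) = nA Sp g (d + 1) q := rfl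
private theorem nA_succ (Sp g d i q) : nA Sp g d ((i + 1) :: q) = g d i q := rfl

private theorem nA_replicate (Sp g) : ∀ k d q,
    nA Sp g d (List.replicate k 0 ++ q) = nA Sp g (d + k) q := by
  intro k
  induction k with
  | zero => intro d q; simp [List.replicate]
  | succ k ih =>
    intro d q
    rw [List.replicate_succ, List.cons_append, nA_zero, ih]
    have h : d + 1 + k = d + (k + 1) := by omega
    rw [h]

/-- Build an ∞-proof from an infinite spine whose side premisses all have
finite derivations, provided the spine carries a progressing trace. -/
private theorem spine_infProof {rule : Sequent → List Sequent → Prop}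
    (Sp : ℕ → Sequent) (pr : ℕ → List Sequent)
    (hr : ∀ d, rule (Sp d) (pr d))
    (h0 : ∀ d, (pr d)[0]? = some (Sp (d + 1)))
    (hside : ∀ d i S', (pr d)[i + 1]? = some S' → Deriv rule S')
    (hprog : Progressing Sp) :
    InfProof rule (Sp 0) := by
  classical
  have H : ∀ d i : ℕ, ∃ t : List ℕ → Option Sequent,
      t [] = (pr d)[i + 1]? ∧
      (∀ p S', t p = some S' → ∃ ps, rule S' ps ∧ ∀ k : ℕ, t (p ++ [k]) = ps[k]?) ∧
      ∃ N, ∀ p : List ℕ, N ≤ p.length → t p = none := by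
    intro d i
    cases hsi : (pr d)[i + 1]? with
    | none => exact ⟨fun _ => none, rfl, by simp, 0, by simp⟩
    | some S' =>
      obtain ⟨t, h1, h2, h3⟩ := exists_tree (hside d i S' hsi)
      exact ⟨t, by rw [h1], h2, h3⟩
  choose g hg1 hg2 hg3 using H
  choose Nb hNb using hg3
  have hchild : ∀ (p : List ℕ) (d : ℕ) (S' : Sequent), nA Sp g d p = some S' →
      ∃ ps, rule S' ps ∧ ∀ k : ℕ, nA Sp g d (p ++ [k]) = ps[k]? := by
    intro p
    induction p with
    | nil =>
      intro d S' hS'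
      rw [nA_nil] at hS'
      cases hS'
      refine ⟨pr d, hr d, fun k => ?_⟩
      match k with
      | 0 => rw [List.nil_append, nA_zero, nA_nil, h0 d]
      | k + 1 => rw [List.nil_append, nA_succ, hg1 d k]
    | cons i q ih =>
      intro d S' hS'
      match i with
      | 0 =>
        rw [nA_zero] at hS'
        obtain ⟨ps, h1, h2⟩ := ih (d + 1) S' hS'
        refine ⟨ps, h1, fun k => ?_⟩
        rw [List.cons_append, nA_zero]
        exact h2 k
      | i + 1 =>
        rw [nA_succ] at hS'
        obtain ⟨ps, h1, h2⟩ := hg2 d i q S' hS'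
        refine ⟨ps, h1, fun k => ?_⟩
        rw [List.cons_append, nA_succ]
        exact h2 k
  refine ⟨⟨nA Sp g 0, nA_nil Sp g 0, fun p S hp => hchild p 0 S hp⟩, ?_⟩
  intro f Sb hf
  replace hf : ∀ n, nA Sp g 0 (branchPath f n) = some (Sb n) := hf
  have hsplit : ∀ n m : ℕ, branchPath f (n + 1 + m) =
      (List.range n).map f ++ f n :: (List.range m).map (fun a => f (n + 1 + a)) := by
    intro n m
    show (List.range (n + 1 + m)).map f = _
    rw [List.range_add, List.range_succ]
    simp [List.map_map, List.append_assoc, Function.comp]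
  have hfz : ∀ n, f n = 0 := by
    intro n
    induction n using Nat.strong_induction_on with
    | _ n ihn =>
      by_contra hne
      obtain ⟨i, hi⟩ : ∃ i, f n = i + 1 := by
        cases hfn : f n with
        | zero => exact absurd hfn hne
        | succ i => exact ⟨i, rfl⟩
      have hrep : (List.range n).map f = List.replicate n 0 := by
        refine List.eq_replicate_iff.mpr ⟨by simp, ?_⟩
        intro b hb
        obtain ⟨a, ha, rfl⟩ := List.mem_map.mp hb
        exact ihn a (List.mem_range.mp ha)
      have hnode := hf (n + 1 + Nb n i)
      rw [hsplit n (Nb n i), hrep, hi] at hnode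
      rw [nA_replicate, Nat.zero_add, nA_succ] at hnode
      rw [hNb n i _ (by simp)] at hnode
      cases hnode
  have hSb : ∀ n, Sb n = Sp n := by
    intro n
    have hrep : branchPath f n = List.replicate n 0 := by
      unfold branchPath
      refine List.eq_replicate_iff.mpr ⟨by simp, ?_⟩
      intro b hb
      obtain ⟨a, _, rfl⟩ := List.mem_map.mp hb
      exact hfz a
    have h1 := hf n
    rw [hrep] at h1
    have h2 : nA Sp g 0 (List.replicate n 0 ++ []) = some (Sp n) := by
      rw [nA_replicate]
      simp [nA_nil]
    rw [List.append_nil] at h2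
    rw [h2] at h1
    exact (Option.some.inj h1).symm
  obtain ⟨k, xt, ha, hb, hc⟩ := hprog
  refine ⟨k, xt, fun i hi => ?_, fun i hi => ?_, fun m => ?_⟩
  · simp only [hSb]; exact ha i hi
  · simp only [hSb]; exact hb i hi
  · obtain ⟨i, h1, h2, h3⟩ := hc m
    exact ⟨i, h1, h2, by simp only [hSb]; exact h3⟩

end LobAux


section LobAux2

@[local simp] private theorem relVars_empty : relVars (∅ : Set (ℕ × ℕ)) = ∅ := by
  ext z; simp [relVars]

@[local simp] private theorem mLabels_zero : mLabels (0 : Multiset LFormula) = ∅ := by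
  ext z; simp [mLabels]

@[local simp] private theorem mLabels_cons (q : LFormula) (Γ : Multiset LFormula) :
    mLabels (q ::ₘ Γ) = insert q.1 (mLabels Γ) := by
  obtain ⟨y, F⟩ := q
  ext z
  simp [mLabels, Multiset.mem_cons, Prod.ext_iff, exists_or, Set.mem_insert_iff]

@[local simp] private theorem mLabels_singleton (q : LFormula) :
    mLabels ({q} : Multiset LFormula) = {q.1} := by
  obtain ⟨y, F⟩ := q
  ext z
  simp [mLabels, Prod.ext_iff]

private theorem relVars_insert_subset (q : ℕ × ℕ) (R : Set (ℕ × ℕ)) :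
    relVars (insert q R) ⊆ insert q.1 (insert q.2 (relVars R)) := by
  rintro z ⟨w, h | h⟩ <;> rcases h with h | h
  · exact Or.inl (congrArg Prod.fst h)
  · exact Or.inr (Or.inr ⟨w, Or.inl h⟩)
  · exact Or.inr (Or.inl (congrArg Prod.snd h))
  · exact Or.inr (Or.inr ⟨w, Or.inr h⟩)

private theorem exists_fresh {V : Set ℕ} (h : V.Finite) : ∃ z, z ∉ V :=
  h.infinite_compl.nonempty

private theorem singleRHS_singleton (R : Set (ℕ × ℕ)) (L : Multiset LFormula) (q : LFormula) :
    SingleRHS ⟨R, L, {q}⟩ := by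
  simp [SingleRHS]

private theorem all_mem_one {P : Sequent → Prop} {a : Sequent} (h : P a) :
    ∀ p ∈ [a], P p := by
  intro p hp
  simp only [List.mem_singleton] at hp
  subst hp; exact h

private theorem all_mem_two {P : Sequent → Prop} {a b : Sequent} (h1 : P a) (h2 : P b) :
    ∀ p ∈ [a, b], P p := by
  intro p hp
  simp only [List.mem_cons, List.not_mem_nil, or_false] at hp
  rcases hp with rfl | rfl
  · exact h1
  · exact h2

/-- General identity: `R, y:C ⇒ y:C` is finitely derivable in ℓIK4 whenever
`R` involves only finitely many labels. -/
private theorem deriv_id_s6 : ∀ (C : Formula) (R : Set (ℕ × ℕ)) (y : ℕ),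
    (relVars R).Finite → Deriv RuleLIK4 ⟨R, {(y, C)}, {(y, C)}⟩ := by
  intro C
  induction C with
  | atom p =>
    intro R y hR
    exact Deriv.step _ [] ⟨Rule.id R y p, singleRHS_singleton _ _ _, by simp⟩ (by simp)
  | bot =>
    intro R y hR
    exact Deriv.step _ [] ⟨Rule.botL R 0 {(y, Formula.bot)} y, singleRHS_singleton _ _ _,
      by simp⟩ (by simp)
  | and C₁ C₂ ih₁ ih₂ =>
    intro R y hR
    refine Deriv.step _ [⟨R, {(y, Formula.and C₁ C₂)}, {(y, C₁)}⟩,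
        ⟨R, {(y, Formula.and C₁ C₂)}, {(y, C₂)}⟩]
      ⟨Rule.andR R {(y, Formula.and C₁ C₂)} 0 y C₁ C₂, singleRHS_singleton _ _ _,
        all_mem_two (singleRHS_singleton _ _ _) (singleRHS_singleton _ _ _)⟩
      (all_mem_two ?_ ?_)
    · exact Deriv.step _ [⟨R, {(y, C₁)}, {(y, C₁)}⟩]
        ⟨Rule.andL₁ R 0 {(y, C₁)} y C₁ C₂, singleRHS_singleton _ _ _,
          all_mem_one (singleRHS_singleton _ _ _)⟩
        (all_mem_one (ih₁ R y hR))
    · exact Deriv.step _ [⟨R, {(y, C₂)}, {(y, C₂)}⟩]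
        ⟨Rule.andL₂ R 0 {(y, C₂)} y C₁ C₂, singleRHS_singleton _ _ _,
          all_mem_one (singleRHS_singleton _ _ _)⟩
        (all_mem_one (ih₂ R y hR))
  | or C₁ C₂ ih₁ ih₂ =>
    intro R y hR
    refine Deriv.step _ [⟨R, {(y, C₁)}, {(y, Formula.or C₁ C₂)}⟩,
        ⟨R, {(y, C₂)}, {(y, Formula.or C₁ C₂)}⟩]
      ⟨Rule.orL R 0 {(y, Formula.or C₁ C₂)} y C₁ C₂, singleRHS_singleton _ _ _,
        all_mem_two (singleRHS_singleton _ _ _) (singleRHS_singleton _ _ _)⟩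
      (all_mem_two ?_ ?_)
    · exact Deriv.step _ [⟨R, {(y, C₁)}, {(y, C₁)}⟩]
        ⟨Rule.orR₁ R {(y, C₁)} 0 y C₁ C₂, singleRHS_singleton _ _ _,
          all_mem_one (singleRHS_singleton _ _ _)⟩
        (all_mem_one (ih₁ R y hR))
    · exact Deriv.step _ [⟨R, {(y, C₂)}, {(y, C₂)}⟩]
        ⟨Rule.orR₂ R {(y, C₂)} 0 y C₁ C₂, singleRHS_singleton _ _ _,
          all_mem_one (singleRHS_singleton _ _ _)⟩
        (all_mem_one (ih₂ R y hR))
  | imp C₁ C₂ ih₁ ih₂ =>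
    intro R y hR
    have hin : Deriv RuleLIK4 ⟨R, (y, C₁) ::ₘ {(y, Formula.imp C₁ C₂)}, {(y, C₂)}⟩ := by
      have hrule := Rule.impL (tr := true) (thn := true) (ir := false)
        R {(y, C₁)} 0 0 {(y, C₂)} y C₁ C₂
      rw [show ({(y, C₁)} : Multiset LFormula) + 0 = {(y, C₁)} from add_zero _,
        show (0 : Multiset LFormula) + {(y, C₂)} = {(y, C₂)} from zero_add _,
        show ((y, Formula.imp C₁ C₂) ::ₘ ({(y, C₁)} : Multiset LFormula))
            = (y, C₁) ::ₘ {(y, Formula.imp C₁ C₂)} from Multiset.cons_swap _ _ _] at hrule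
      exact Deriv.step _ [⟨R, {(y, C₁)}, {(y, C₁)}⟩, ⟨R, {(y, C₂)}, {(y, C₂)}⟩]
        ⟨hrule, by simp [SingleRHS],
          all_mem_two (singleRHS_singleton _ _ _) (singleRHS_singleton _ _ _)⟩
        (all_mem_two (ih₁ R y hR) (ih₂ R y hR))
    exact Deriv.step _ [⟨R, (y, C₁) ::ₘ {(y, Formula.imp C₁ C₂)}, {(y, C₂)}⟩]
      ⟨Rule.impR R {(y, Formula.imp C₁ C₂)} 0 y C₁ C₂ (by simp), singleRHS_singleton _ _ _,
        all_mem_one (singleRHS_singleton _ _ _)⟩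
      (all_mem_one hin)
  | box C₁ ih =>
    intro R y hR
    obtain ⟨z, hz⟩ := exists_fresh (V := relVars R ∪ {y}) (hR.union (Set.finite_singleton y))
    simp only [Set.mem_union, Set.mem_singleton_iff, not_or] at hz
    have hfresh : Fresh z ⟨R, {(y, Formula.box C₁)}, (y, Formula.box C₁) ::ₘ 0⟩ := by
      simp only [Fresh, Sequent.vars, mLabels_singleton, mLabels_cons, mLabels_zero,
        Set.mem_union, Set.mem_singleton_iff, Set.mem_insert_iff, Set.mem_empty_iff_false,
        not_or]
      exact ⟨⟨hz.1, hz.2⟩, hz.2, False.elim⟩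
    have hR' : (relVars (insert (y, z) R)).Finite :=
      Set.Finite.subset ((hR.insert z).insert y) (relVars_insert_subset _ _)
    exact Deriv.step _ [⟨insert (y, z) R, {(y, Formula.box C₁)}, {(z, C₁)}⟩]
      ⟨Rule.boxR R {(y, Formula.box C₁)} 0 y z C₁ (by simp) hfresh, singleRHS_singleton _ _ _,
        all_mem_one (singleRHS_singleton _ _ _)⟩
      (all_mem_one
        (Deriv.step _ [⟨insert (y, z) R, {(z, C₁)}, {(z, C₁)}⟩]
          ⟨Rule.boxL (insert (y, z) R) 0 {(z, C₁)} y z C₁ (Set.mem_insert _ _),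
            singleRHS_singleton _ _ _, all_mem_one (singleRHS_singleton _ _ _)⟩
          (all_mem_one (ih (insert (y, z) R) z hR'))))
  | dia C₁ ih =>
    intro R y hR
    obtain ⟨z, hz⟩ := exists_fresh (V := relVars R ∪ {y}) (hR.union (Set.finite_singleton y))
    simp only [Set.mem_union, Set.mem_singleton_iff, not_or] at hz
    have hfresh : Fresh z ⟨R, (y, Formula.dia C₁) ::ₘ 0, {(y, Formula.dia C₁)}⟩ := by
      simp only [Fresh, Sequent.vars, mLabels_singleton, mLabels_cons, mLabels_zero,
        Set.mem_union, Set.mem_singleton_iff, Set.mem_insert_iff, Set.mem_empty_iff_false,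
        not_or]
      exact ⟨⟨hz.1, hz.2, False.elim⟩, hz.2⟩
    have hR' : (relVars (insert (y, z) R)).Finite :=
      Set.Finite.subset ((hR.insert z).insert y) (relVars_insert_subset _ _)
    exact Deriv.step _ [⟨insert (y, z) R, {(z, C₁)}, {(y, Formula.dia C₁)}⟩]
      ⟨Rule.diaL R 0 {(y, Formula.dia C₁)} y z C₁ hfresh, singleRHS_singleton _ _ _,
        all_mem_one (singleRHS_singleton _ _ _)⟩
      (all_mem_one
        (Deriv.step _ [⟨insert (y, z) R, {(z, C₁)}, {(z, C₁)}⟩]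
          ⟨Rule.diaR (insert (y, z) R) {(z, C₁)} 0 y z C₁ (Set.mem_insert _ _),
            singleRHS_singleton _ _ _, all_mem_one (singleRHS_singleton _ _ _)⟩
          (all_mem_one (ih (insert (y, z) R) z hR'))))

end LobAux2


section LobAux3

/-- `□(□A→A)`. -/
private def LB (A : Formula) : Formula := Formula.box (Formula.imp (Formula.box A) A)

/-- The full transitive relation set on the labels `x, x+1, ..., x+n`. -/
private def Rn (x n : ℕ) : Set (ℕ × ℕ) :=
  {q | ∃ a b : ℕ, a < b ∧ b ≤ n ∧ q = (x + a, x + b)}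

/-- `Rn x n` extended by `(x+n, x+n+1)` and `(x+a, x+n+1)` for `a < j`. -/
private def Qrel (x n j : ℕ) : Set (ℕ × ℕ) :=
  Rn x n ∪ {q | ∃ a : ℕ, (a = n ∨ a < j) ∧ q = (x + a, x + n + 1)}

private theorem Rn_one (x : ℕ) : Rn x 1 = insert (x, x + 1) (∅ : Set (ℕ × ℕ)) := by
  ext ⟨u, v⟩
  simp only [Rn, Set.mem_setOf_eq, Set.mem_insert_iff, Set.mem_empty_iff_false, or_false,
    Prod.mk.injEq]
  constructor
  · rintro ⟨a, b, h1, h2, h3, h4⟩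
    omega
  · rintro ⟨rfl, rfl⟩
    exact ⟨0, 1, by omega, by omega, by omega, by omega⟩

private theorem insert_Rn (x n : ℕ) :
    insert (x + n, x + n + 1) (Rn x n) = Qrel x n 0 := by
  ext ⟨u, v⟩
  simp only [Qrel, Rn, Set.mem_insert_iff, Set.mem_setOf_eq, Set.mem_union, Prod.mk.injEq]
  constructor
  · rintro (⟨rfl, rfl⟩ | ⟨a, b, h1, h2, h3, h4⟩)
    · exact Or.inr ⟨n, Or.inl rfl, by omega, by omega⟩
    · exact Or.inl ⟨a, b, h1, h2, h3, h4⟩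
  · rintro (⟨a, b, h1, h2, h3, h4⟩ | ⟨a, (rfl | ha), h3, h4⟩)
    · exact Or.inr ⟨a, b, h1, h2, h3, h4⟩
    · exact Or.inl ⟨by omega, by omega⟩
    · omega
  
private theorem insert_Qrel (x n j : ℕ) :
    insert (x + j, x + n + 1) (Qrel x n j) = Qrel x n (j + 1) := by
  ext ⟨u, v⟩
  simp only [Qrel, Rn, Set.mem_insert_iff, Set.mem_setOf_eq, Set.mem_union, Prod.mk.injEq]
  constructor
  · rintro (⟨rfl, rfl⟩ | ⟨a, b, h1, h2, h3, h4⟩ | ⟨a, ha, h3, h4⟩)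
    · exact Or.inr ⟨j, by omega, by omega, by omega⟩
    · exact Or.inl ⟨a, b, h1, h2, h3, h4⟩
    · exact Or.inr ⟨a, by omega, h3, h4⟩
  · rintro (⟨a, b, h1, h2, h3, h4⟩ | ⟨a, ha, h3, h4⟩)
    · exact Or.inr (Or.inl ⟨a, b, h1, h2, h3, h4⟩)
    · rcases Nat.lt_or_ge a j with h | h
      · exact Or.inr (Or.inr ⟨a, by omega, h3, h4⟩)
      · rcases ha with rfl | ha
        · exact Or.inr (Or.inr ⟨a, Or.inl rfl, h3, h4⟩)
        · have : a = j := by omega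
          subst this
          exact Or.inl ⟨h3, h4⟩

private theorem Qrel_top (x n : ℕ) : Qrel x n n = Rn x (n + 1) := by
  ext ⟨u, v⟩
  simp only [Qrel, Rn, Set.mem_setOf_eq, Set.mem_union, Prod.mk.injEq]
  constructor
  · rintro (⟨a, b, h1, h2, h3, h4⟩ | ⟨a, ha, h3, h4⟩)
    · exact ⟨a, b, h1, by omega, h3, h4⟩
    · exact ⟨a, n + 1, by omega, by omega, h3, by omega⟩
  · rintro ⟨a, b, h1, h2, h3, h4⟩
    rcases Nat.lt_or_ge b (n + 1) with h | h
    · exact Or.inl ⟨a, b, h1, by omega, h3, h4⟩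
    · have : b = n + 1 := by omega
      subst this
      exact Or.inr ⟨a, by omega, h3, by omega⟩

private theorem mem_Rn {a b n : ℕ} (x : ℕ) (h1 : a < b) (h2 : b ≤ n) :
    (x + a, x + b) ∈ Rn x n := ⟨a, b, h1, h2, rfl⟩

private theorem mem_Rn0 {n : ℕ} (x : ℕ) (h : 1 ≤ n) : (x, x + n) ∈ Rn x n :=
  ⟨0, n, h, le_refl n, rfl⟩

private theorem mem_Qrel_top (x n j : ℕ) : (x + n, x + n + 1) ∈ Qrel x n j :=
  Or.inr ⟨n, Or.inl rfl, rfl⟩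

private theorem mem_Qrel_Rn {a b : ℕ} (x : ℕ) {n : ℕ} (j : ℕ) (h1 : a < b) (h2 : b ≤ n) :
    (x + a, x + b) ∈ Qrel x n j := Or.inl (mem_Rn x h1 h2)

private theorem relVars_Rn_bound {x n u : ℕ} (h : u ∈ relVars (Rn x n)) : u ≤ x + n := by
  obtain ⟨w, h | h⟩ := h <;>
    · obtain ⟨a, b, h1, h2, h3⟩ := h
      rw [Prod.ext_iff] at h3
      simp only at h3
      omega

private theorem relVars_Rn_finite (x n : ℕ) : (relVars (Rn x n)).Finite :=
  Set.Finite.subset (Set.finite_Iic (x + n)) (fun _ h => relVars_Rn_bound h)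

/-- The states of the spine of the ∞-proof of Löb's axiom. -/
private inductive St : Type
  | start | mid | seg (n j : ℕ)

private def nxt : St → St
  | .start => .mid
  | .mid => .seg 1 0
  | .seg n j => if j < n + 3 then .seg n (j + 1) else .seg (n + 1) 0

private theorem nxt_seg (n j : ℕ) :
    nxt (.seg n j) = if j < n + 3 then St.seg n (j + 1) else St.seg (n + 1) 0 := rfl

/-- The sequent at each state of the spine. -/
private def seqOf (A : Formula) (x : ℕ) : St → Sequent
  | .start => ⟨∅, 0, {(x, lobAx A)}⟩
  | .mid => ⟨∅, {(x, LB A)}, {(x, Formula.box A)}⟩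
  | .seg n 0 => ⟨Rn x n, {(x, LB A)}, {(x + n, A)}⟩
  | .seg n 1 => ⟨Rn x n, (x, LB A) ::ₘ {(x, LB A)}, {(x + n, A)}⟩
  | .seg n 2 => ⟨Rn x n, (x + n, Formula.imp (Formula.box A) A) ::ₘ {(x, LB A)}, {(x + n, A)}⟩
  | .seg n 3 => ⟨Rn x n, {(x, LB A)}, {(x + n, Formula.box A)}⟩
  | .seg n (j + 4) => ⟨Qrel x n j, {(x, LB A)}, {(x + n + 1, A)}⟩

/-- The premisses of the rule applied at each state of the spine. -/
private def premsOf (A : Formula) (x : ℕ) : St → List Sequent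
  | .start => [⟨∅, {(x, LB A)}, {(x, Formula.box A)}⟩]
  | .mid => [⟨insert (x, x + 1) ∅, {(x, LB A)}, {(x + 1, A)}⟩]
  | .seg n 0 => [⟨Rn x n, (x, LB A) ::ₘ (x, LB A) ::ₘ 0, {(x + n, A)}⟩]
  | .seg n 1 =>
      [⟨Rn x n, (x + n, Formula.imp (Formula.box A) A) ::ₘ {(x, LB A)}, {(x + n, A)}⟩]
  | .seg n 2 => [⟨Rn x n, {(x, LB A)}, {(x + n, Formula.box A)}⟩,
      ⟨Rn x n, {(x + n, A)}, {(x + n, A)}⟩]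
  | .seg n 3 => [⟨insert (x + n, x + n + 1) (Rn x n), {(x, LB A)}, {(x + n + 1, A)}⟩]
  | .seg n (j + 4) => [⟨insert (x + j, x + n + 1) (Qrel x n j), {(x, LB A)}, {(x + n + 1, A)}⟩]

private def Ok : St → Prop
  | .seg n j => 1 ≤ n ∧ j ≤ n + 3
  | _ => True

private theorem fresh_mid (A : Formula) (x : ℕ) :
    Fresh (x + 1) ⟨∅, {(x, LB A)}, (x, Formula.box A) ::ₘ 0⟩ := by
  simp only [Fresh, Sequent.vars, relVars_empty, mLabels_singleton, mLabels_cons, mLabels_zero,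
    Set.mem_union, Set.mem_singleton_iff, Set.mem_insert_iff, Set.mem_empty_iff_false, not_or]
  refine ⟨⟨False.elim, by omega⟩, by omega, False.elim⟩

private theorem fresh_seg (A : Formula) (x n : ℕ) :
    Fresh (x + n + 1) ⟨Rn x n, {(x, LB A)}, (x + n, Formula.box A) ::ₘ 0⟩ := by
  simp only [Fresh, Sequent.vars, mLabels_singleton, mLabels_cons, mLabels_zero,
    Set.mem_union, Set.mem_singleton_iff, Set.mem_insert_iff, Set.mem_empty_iff_false, not_or]
  refine ⟨⟨fun h => by have := relVars_Rn_bound h; omega, by omega⟩, by omega, False.elim⟩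

private theorem rule_of (A : Formula) (x : ℕ) (s : St) (hs : Ok s) :
    RuleLIK4 (seqOf A x s) (premsOf A x s) := by
  match s with
  | .start =>
    exact ⟨Rule.impR ∅ 0 0 x (LB A) (Formula.box A) (by simp), singleRHS_singleton _ _ _,
      all_mem_one (singleRHS_singleton _ _ _)⟩
  | .mid =>
    exact ⟨Rule.boxR ∅ {(x, LB A)} 0 x (x + 1) A (by simp) (fresh_mid A x),
      singleRHS_singleton _ _ _, all_mem_one (singleRHS_singleton _ _ _)⟩
  | .seg n 0 =>
    exact ⟨Rule.ctrL (Rn x n) 0 {(x + n, A)} x (LB A), singleRHS_singleton _ _ _,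
      all_mem_one (singleRHS_singleton _ _ _)⟩
  | .seg n 1 =>
    exact ⟨Rule.boxL (Rn x n) {(x, LB A)} {(x + n, A)} x (x + n)
        (Formula.imp (Formula.box A) A) (mem_Rn0 x hs.1),
      by simp [SingleRHS, seqOf], all_mem_one (singleRHS_singleton _ _ _)⟩
  | .seg n 2 =>
    have hrule := Rule.impL (tr := true) (thn := true) (ir := false)
      (Rn x n) {(x, LB A)} 0 0 {(x + n, A)} (x + n) (Formula.box A) A
    rw [show ({(x, LB A)} : Multiset LFormula) + 0 = {(x, LB A)} from add_zero _,
      show (0 : Multiset LFormula) + {(x + n, A)} = {(x + n, A)} from zero_add _] at hrule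
    exact ⟨hrule, by simp [SingleRHS, seqOf],
      all_mem_two (singleRHS_singleton _ _ _) (singleRHS_singleton _ _ _)⟩
  | .seg n 3 =>
    exact ⟨Rule.boxR (Rn x n) {(x, LB A)} 0 (x + n) (x + n + 1) A (by simp) (fresh_seg A x n),
      singleRHS_singleton _ _ _, all_mem_one (singleRHS_singleton _ _ _)⟩
  | .seg n (j + 4) =>
    have hj : j < n := by
      have := hs.2
      omega
    exact ⟨Rule.trans (Qrel x n j) {(x, LB A)} {(x + n + 1, A)} (x + j) (x + n) (x + n + 1)
        rfl (mem_Qrel_Rn x j hj (le_refl n)) (mem_Qrel_top x n j),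
      singleRHS_singleton _ _ _, all_mem_one (singleRHS_singleton _ _ _)⟩

private theorem h0_of (A : Formula) (x : ℕ) (s : St) (hs : Ok s) :
    (premsOf A x s)[0]? = some (seqOf A x (nxt s)) := by
  match s with
  | .start => rfl
  | .mid =>
    rw [show nxt .mid = .seg 1 0 from rfl]
    simp [premsOf, seqOf, Rn_one]
  | .seg n 0 =>
    have hlt0 : (0:ℕ) < n + 3 := by omega
    rw [nxt_seg, if_pos hlt0]
    rfl
  | .seg n 1 =>
    have hlt1 : (1:ℕ) < n + 3 := by omega
    rw [nxt_seg, if_pos hlt1]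
    rfl
  | .seg n 2 =>
    have hlt2 : (2:ℕ) < n + 3 := by omega
    rw [nxt_seg, if_pos hlt2]
    rfl
  | .seg n 3 =>
    have hn1 : 1 ≤ n := hs.1
    have hlt3 : (3:ℕ) < n + 3 := by omega
    rw [nxt_seg, if_pos hlt3]
    simp [premsOf, seqOf, insert_Rn]
  | .seg n (j + 4) =>
    by_cases hlt : j + 4 < n + 3
    · rw [nxt_seg, if_pos hlt]
      simp [premsOf, seqOf, insert_Qrel]
    · have hj : j + 4 = n + 3 := by
        have := hs.2
        omega
      have hjn : j + 1 = n := by omega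
      rw [nxt_seg, if_neg hlt]
      have hrel : insert (x + j, x + (n + 1)) (Qrel x n j) = Rn x (n + 1) := by
        rw [← Nat.add_assoc, insert_Qrel, hjn, Qrel_top]
      simp [premsOf, seqOf, hrel, Nat.add_assoc]

private theorem hside_of (A : Formula) (x : ℕ) (s : St) (i : ℕ) (S' : Sequent)
    (h : (premsOf A x s)[i + 1]? = some S') : Deriv RuleLIK4 S' := by
  match s with
  | .start => simp [premsOf] at h
  | .mid => simp [premsOf] at h
  | .seg n 0 => simp [premsOf] at h
  | .seg n 1 => simp [premsOf] at h
  | .seg n 2 =>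
    match i with
    | 0 =>
      simp only [premsOf, List.getElem?_cons_succ, List.getElem?_cons_zero,
        Option.some.injEq] at h
      subst h
      exact deriv_id_s6 A (Rn x n) (x + n) (relVars_Rn_finite x n)
    | i + 1 => simp [premsOf] at h
  | .seg n 3 => simp [premsOf] at h
  | .seg n (j + 4) => simp [premsOf] at h

private theorem Ok_nxt (s : St) (hs : Ok s) : Ok (nxt s) := by
  match s with
  | .start => exact trivial
  | .mid => exact ⟨by omega, by omega⟩
  | .seg n j =>
    by_cases hlt : j < n + 3
    · rw [nxt_seg, if_pos hlt]
      exact ⟨hs.1, by omega⟩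
    · rw [nxt_seg, if_neg hlt]
      exact ⟨by omega, by omega⟩

end LobAux3


section LobAux4

private def labOf (x : ℕ) : St → ℕ
  | .start => x
  | .mid => x
  | .seg n j => if j ≤ 4 then x + n else x + n + 1

private theorem labOf_seg (x n j : ℕ) :
    labOf x (.seg n j) = if j ≤ 4 then x + n else x + n + 1 := rfl

private def iterSt (d : ℕ) : St := nxt^[d] St.start

private theorem iterSt_succ (d : ℕ) : iterSt (d + 1) = nxt (iterSt d) :=
  Function.iterate_succ_apply' nxt d St.start

private theorem Ok_iter (d : ℕ) : Ok (iterSt d) := by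
  induction d with
  | zero => exact trivial
  | succ d ih => rw [iterSt_succ]; exact Ok_nxt _ ih

private theorem iter_two : iterSt 2 = St.seg 1 0 := rfl

private theorem isSeg_iter : ∀ d, 2 ≤ d → ∃ n j, 1 ≤ n ∧ j ≤ n + 3 ∧ iterSt d = .seg n j := by
  intro d hd
  induction d with
  | zero => omega
  | succ d ih =>
    rcases Nat.lt_or_ge d 2 with h | h
    · have hd1 : d = 1 := by omega
      subst hd1
      exact ⟨1, 0, by omega, by omega, iter_two⟩
    · obtain ⟨n, j, hn, hj, hseg⟩ := ih h
      rw [iterSt_succ, hseg]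
      by_cases hlt : j < n + 3
      · exact ⟨n, j + 1, hn, by omega, by rw [nxt_seg, if_pos hlt]⟩
      · exact ⟨n + 1, 0, by omega, by omega, by rw [nxt_seg, if_neg hlt]⟩

private theorem lab_mem (A : Formula) (x : ℕ) (n j : ℕ) (hn : 1 ≤ n) (hj : j ≤ n + 3) :
    labOf x (.seg n j) ∈ (seqOf A x (.seg n j)).vars := by
  match j with
  | 0 => exact Set.mem_union_right _ ⟨A, Multiset.mem_singleton_self _⟩
  | 1 => exact Set.mem_union_right _ ⟨A, Multiset.mem_singleton_self _⟩
  | 2 => exact Set.mem_union_right _ ⟨A, Multiset.mem_singleton_self _⟩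
  | 3 => exact Set.mem_union_right _ ⟨Formula.box A, Multiset.mem_singleton_self _⟩
  | 4 =>
    exact Set.mem_union_left _ (Set.mem_union_left _ ⟨x + n + 1, Or.inl (mem_Qrel_top x n 0)⟩)
  | (j + 5) =>
    rw [labOf_seg, if_neg (by omega)]
    exact Set.mem_union_left _
      (Set.mem_union_left _ ⟨x + n, Or.inr (mem_Qrel_top x n (j + 1))⟩)

private theorem lab_step (A : Formula) (x : ℕ) (n j : ℕ) (hn : 1 ≤ n) :
    labOf x (nxt (.seg n j)) = labOf x (.seg n j) ∨
      (labOf x (.seg n j), labOf x (nxt (.seg n j))) ∈ (seqOf A x (.seg n j)).rel := by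
  match j with
  | 0 =>
    have h : (0:ℕ) < n + 3 := by omega
    rw [nxt_seg, if_pos h]; left; rfl
  | 1 =>
    have h : (1:ℕ) < n + 3 := by omega
    rw [nxt_seg, if_pos h]; left; rfl
  | 2 =>
    have h : (2:ℕ) < n + 3 := by omega
    rw [nxt_seg, if_pos h]; left; rfl
  | 3 =>
    have h : (3:ℕ) < n + 3 := by omega
    rw [nxt_seg, if_pos h]; left; rfl
  | 4 =>
    right
    by_cases h : 4 < n + 3
    · rw [nxt_seg, if_pos h]
      exact mem_Qrel_top x n 0
    · rw [nxt_seg, if_neg h]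
      exact mem_Qrel_top x n 0
  | (j + 5) =>
    left
    by_cases h : j + 5 < n + 3
    · rw [nxt_seg, if_pos h, labOf_seg, labOf_seg, if_neg (by omega), if_neg (by omega)]
    · rw [nxt_seg, if_neg h, labOf_seg, labOf_seg, if_pos (by omega), if_neg (by omega)]
      rfl

private theorem iter_seg0 : ∀ n, 1 ≤ n → ∃ d, n ≤ d ∧ iterSt d = .seg n 0 := by
  intro n hn
  induction n with
  | zero => omega
  | succ n ih =>
    rcases Nat.lt_or_ge n 1 with h | h
    · have hn0 : n = 0 := by omega
      subst hn0
      exact ⟨2, by omega, iter_two⟩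
    · obtain ⟨d, hd, hseg⟩ := ih h
      have hstep : ∀ j, j ≤ n + 3 → iterSt (d + j) = .seg n j := by
        intro j
        induction j with
        | zero => intro _; simpa using hseg
        | succ j ihj =>
          intro hj
          have h1 := ihj (by omega)
          have h2 : j < n + 3 := by omega
          rw [show d + (j + 1) = (d + j) + 1 from rfl, iterSt_succ, h1, nxt_seg, if_pos h2]
      have h3 := hstep (n + 3) (le_refl _)
      have h4 : ¬ (n + 3 < n + 3) := by omega
      refine ⟨d + n + 4, by omega, ?_⟩
      have h5 : d + n + 4 = (d + (n + 3)) + 1 := by omega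
      rw [h5, iterSt_succ, h3, nxt_seg, if_neg h4]

private theorem prog (A : Formula) (x : ℕ) :
    Progressing (fun d => seqOf A x (iterSt d)) := by
  refine ⟨2, fun d => labOf x (iterSt d), ?_, ?_, ?_⟩
  · intro i hi
    obtain ⟨n, j, hn, hj, hseg⟩ := isSeg_iter i hi
    simp only [hseg]
    exact lab_mem A x n j hn hj
  · intro i hi
    obtain ⟨n, j, hn, hj, hseg⟩ := isSeg_iter i hi
    simp only [iterSt_succ, hseg]
    exact lab_step A x n j hn
  · intro m
    obtain ⟨d, hd, hseg⟩ := iter_seg0 (m + 1) (by omega)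
    have hstep : ∀ j, j ≤ 4 → iterSt (d + j) = .seg (m + 1) j := by
      intro j
      induction j with
      | zero => intro _; simpa using hseg
      | succ j ihj =>
        intro hj
        have h1 := ihj (by omega)
        have h2 : j < m + 1 + 3 := by omega
        rw [show d + (j + 1) = (d + j) + 1 from rfl, iterSt_succ, h1, nxt_seg, if_pos h2]
    have h4 : iterSt (d + 4) = .seg (m + 1) 4 := hstep 4 (le_refl _)
    refine ⟨d + 4, by omega, by omega, ?_⟩
    have h5 : iterSt (d + 4 + 1) = nxt (iterSt (d + 4)) := iterSt_succ _
    show (labOf x (iterSt (d + 4)), labOf x (iterSt (d + 4 + 1))) ∈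
      (seqOf A x (iterSt (d + 4))).rel
    rw [h5, h4]
    by_cases h : 4 < m + 1 + 3
    · rw [nxt_seg, if_pos h]
      exact mem_Qrel_top x (m + 1) 0
    · rw [nxt_seg, if_neg h]
      exact mem_Qrel_top x (m + 1) 0

end LobAux4


/-- **ℓIGL derives Löb's axiom.** There is an ∞-proof in ℓIK4 (the restriction
of ℓK4 to sequents with exactly one formula on the RHS) of
`∅ ⇒ x : □(□A→A)→□A`. -/
theorem lIGL_lob (A : Formula) (x : ℕ) :
    InfProof RuleLIK4 ⟨∅, 0, {(x, lobAx A)}⟩ := by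
  have h := spine_infProof (rule := RuleLIK4)
    (fun d => seqOf A x (iterSt d)) (fun d => premsOf A x (iterSt d))
    (fun d => rule_of A x _ (Ok_iter d))
    (fun d => by
      show (premsOf A x (iterSt d))[0]? = some (seqOf A x (iterSt (d + 1)))
      rw [iterSt_succ]
      exact h0_of A x _ (Ok_iter d))
    (fun d i S' hS => hside_of A x _ i S' hS)
    (prog A x)
  exact h

end IGL
end
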